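/- arXiv:1912.01926 — 5 statements merged into one kernel-verified Lean document; each statement's English description precedes it below -/
import Mathlib

section
/- (Fractional Morrey estimate) Let Ω ⊆ ℝ^N be a bounded open set, 0 < s < 1 and 1 ≤ p < ∞ with sp > N, and set α = s − N/p. Then every u ∈ W^{s,p}_0(Ω) admits a continuous representative ũ, and there is a constant C depending on N, s, p and Ω such that [ũ]_α := sup_{x≠y, x,y∈Ω} |ũ(x)−ũ(y)|/|x−y|^α ≤ C [u]_{s,p}. -/
open MeasureTheory ENNReal Filter Topology

noncomputable section

/-- `N`-dimensional Euclidean space. -/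
abbrev Euc (N : ℕ) := EuclideanSpace ℝ (Fin N)

/-- The `p`-th power of the Gagliardo seminorm:
`∬_{ℝ^N×ℝ^N} |u(x)-u(y)|^p / |x-y|^{N+sp} dx dy`. -/
def gagIntegral (N : ℕ) (s p : ℝ) (u : Euc N → ℝ) : ℝ≥0∞ :=
  ∫⁻ q : Euc N × Euc N,
    ENNReal.ofReal (|u q.1 - u q.2| ^ p / ‖q.1 - q.2‖ ^ ((N : ℝ) + s * p)) ∂volume

/-- The Gagliardo seminorm `[u]_{s,p}`. -/
def gagSemi (N : ℕ) (s p : ℝ) (u : Euc N → ℝ) : ℝ≥0∞ :=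
  gagIntegral N s p u ^ (1 / p)

/-- Membership in `W^{s,p}_0(Ω)`: `u ∈ L^p(ℝ^N)`, `[u]_{s,p} < ∞` and `u = 0` a.e. in `ℝ^N ∖ Ω`. -/
def memW0 (N : ℕ) (s p : ℝ) (Ω : Set (Euc N)) (u : Euc N → ℝ) : Prop :=
  MemLp u (ENNReal.ofReal p) volume ∧ gagSemi N s p u < ⊤ ∧
    ∀ᵐ x ∂(volume : Measure (Euc N)), x ∉ Ω → u x = 0

/-! Compare averages of `u` over two balls `B(x, r)`, `B(y, r')` with radii in `[ρ/2, ρ]` and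
`|x - y| ≤ ρ`: writing `u_B - u_B'` as the average of `u ξ - u η` over `B × B'` and applying
Jensen, the factor `|ξ - η|^(N + sp) ≤ (3ρ)^(N + sp)` turns it into
`|u_B - u_B'| ≤ C [u]_{s,p} ρ^α` with `α = s - N/p > 0`. Summing this over dyadic radii shows
that `r ↦ u_{B(x, r)}` converges as `r → 0` at rate `r^α`, so the limit is `α`-Hölder
continuous; by Lebesgue's differentiation theorem it agrees with `u` almost everywhere. -/

open Metric

section Averages

variable {α β E : Type*} [MeasurableSpace α] [MeasurableSpace β] [NormedAddCommGroup E]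
  [NormedSpace ℝ E]

theorem enorm_average_le_laverage (μ : Measure α) (f : α → E) :
    ‖⨍ x, f x ∂μ‖ₑ ≤ ⨍⁻ x, ‖f x‖ₑ ∂μ :=
  enorm_integral_le_lintegral_enorm f

theorem laverage_le_rpow_laverage_rpow (μ : Measure α) [IsFiniteMeasure μ] {p : ℝ} (hp : 1 ≤ p)
    {f : α → ℝ≥0∞} (hf : AEMeasurable f μ) :
    ⨍⁻ x, f x ∂μ ≤ (⨍⁻ x, f x ^ p ∂μ) ^ (1 / p) := by
  rcases eq_zero_or_neZero μ with rfl | _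
  · simp
  have h := eLpNorm'_le_eLpNorm'_of_exponent_le one_pos hp ((μ Set.univ)⁻¹ • μ)
    (hf.aestronglyMeasurable.smul_measure _)
  simpa [eLpNorm'_eq_lintegral_enorm, laverage_eq'] using h

theorem average_sub_average_eq_average_prod (μ : Measure α) (ν : Measure β) [IsFiniteMeasure μ]
    [NeZero μ] [IsFiniteMeasure ν] [NeZero ν] {f : α → E} {g : β → E} (hf : Integrable f μ)
    (hg : Integrable g ν) :
    ⨍ x, f x ∂μ - ⨍ y, g y ∂ν = ⨍ z, f z.1 - g z.2 ∂μ.prod ν := by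
  have hμ : μ.real Set.univ ≠ 0 :=
    (ENNReal.toReal_pos (Measure.measure_univ_ne_zero.2 (NeZero.ne μ)) (measure_ne_top μ _)).ne'
  have hν : ν.real Set.univ ≠ 0 :=
    (ENNReal.toReal_pos (Measure.measure_univ_ne_zero.2 (NeZero.ne ν)) (measure_ne_top ν _)).ne'
  rw [average_eq, average_eq, average_eq, integral_sub (hf.comp_fst ν) (hg.comp_snd μ),
    integral_fun_fst, integral_fun_snd, ← Set.univ_prod_univ, measureReal_prod_prod,
    smul_sub, smul_smul, smul_smul]
  congr 2 <;> field_simp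

theorem enorm_average_sub_average_le (μ : Measure α) (ν : Measure β) [IsFiniteMeasure μ]
    [NeZero μ] [IsFiniteMeasure ν] [NeZero ν] {f : α → E} {g : β → E} (hf : Integrable f μ)
    (hg : Integrable g ν) {p : ℝ} (hp : 1 ≤ p) :
    ‖⨍ x, f x ∂μ - ⨍ y, g y ∂ν‖ₑ ≤ (⨍⁻ z, ‖f z.1 - g z.2‖ₑ ^ p ∂μ.prod ν) ^ (1 / p) := by
  rw [average_sub_average_eq_average_prod μ ν hf hg]
  exact (enorm_average_le_laverage _ _).trans <| laverage_le_rpow_laverage_rpow _ hp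
    ((hf.comp_fst ν).sub (hg.comp_snd μ)).aestronglyMeasurable.enorm

end Averages

section Gagliardo

variable {N : ℕ} {s p : ℝ}

theorem setLIntegral_enorm_sub_rpow_le_gagIntegral (hp : 0 < p) (he : 0 ≤ (N : ℝ) + s * p)
    (u : Euc N → ℝ) {S : Set (Euc N × Euc N)} (hS : MeasurableSet S) {D : ℝ}
    (hD : ∀ z ∈ S, ‖z.1 - z.2‖ ≤ D) :
    ∫⁻ z in S, ‖u z.1 - u z.2‖ₑ ^ p ≤
      ENNReal.ofReal (D ^ ((N : ℝ) + s * p)) * gagIntegral N s p u := by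
  rw [gagIntegral, ← lintegral_const_mul' _ _ ENNReal.ofReal_ne_top]
  refine (setLIntegral_mono' hS fun z hzS => ?_).trans (setLIntegral_le_lintegral S _)
  rcases eq_or_ne z.1 z.2 with h | h
  · simp [h, hp]
  have hz : 0 < ‖z.1 - z.2‖ := norm_pos_iff.2 (sub_ne_zero.2 h)
  rw [Real.enorm_eq_ofReal_abs, ENNReal.ofReal_rpow_of_nonneg (abs_nonneg _) hp.le,
    ← ENNReal.ofReal_mul (Real.rpow_nonneg (hz.le.trans (hD z hzS)) _), mul_div_assoc']
  refine ENNReal.ofReal_le_ofReal ?_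
  rw [le_div_iff₀ (by positivity), mul_comm]
  gcongr
  exact hD z hzS

theorem laverage_prod_restrict_enorm_sub_rpow_le (hp : 0 < p) (he : 0 ≤ (N : ℝ) + s * p)
    (u : Euc N → ℝ) {B B' : Set (Euc N)} (hB : MeasurableSet B) (hB' : MeasurableSet B')
    {D : ℝ} (hD : ∀ ξ ∈ B, ∀ η ∈ B', ‖ξ - η‖ ≤ D) :
    ⨍⁻ z, ‖u z.1 - u z.2‖ₑ ^ p ∂(volume.restrict B).prod (volume.restrict B') ≤
      (volume B * volume B')⁻¹ * ENNReal.ofReal (D ^ ((N : ℝ) + s * p)) *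
        gagIntegral N s p u := by
  rw [laverage_eq, Measure.prod_restrict, ← Measure.volume_eq_prod, Measure.restrict_apply_univ,
    Measure.volume_eq_prod, Measure.prod_prod, ENNReal.div_eq_inv_mul, mul_assoc,
    ← Measure.volume_eq_prod]
  gcongr
  exact setLIntegral_enorm_sub_rpow_le_gagIntegral hp he u (hB.prod hB')
    fun z hz => hD _ hz.1 _ hz.2

theorem abs_setAverage_closedBall_sub_le (hp : 1 ≤ p) (he : 0 ≤ (N : ℝ) + s * p)
    {u : Euc N → ℝ} (hu : MemLp u (ENNReal.ofReal p) volume) (hu_semi : gagSemi N s p u ≠ ⊤)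
    {x y : Euc N} {r r' D : ℝ} (hr : 0 < r) (hr' : 0 < r')
    (hD : ∀ ξ ∈ closedBall x r, ∀ η ∈ closedBall y r', ‖ξ - η‖ ≤ D) :
    |(⨍ ξ in closedBall x r, u ξ) - ⨍ η in closedBall y r', u η| ≤
      (D ^ ((N : ℝ) + s * p) /
        (volume.real (closedBall x r) * volume.real (closedBall y r'))) ^ (1 / p) *
        (gagSemi N s p u).toReal := by
  set B := closedBall x r
  set B' := closedBall y r'
  have hB : 0 < volume B := measure_closedBall_pos volume x hr
  have hB' : 0 < volume B' := measure_closedBall_pos volume y hr'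
  have hBt : volume B ≠ ⊤ := measure_closedBall_lt_top.ne
  have hB't : volume B' ≠ ⊤ := measure_closedBall_lt_top.ne
  have : IsFiniteMeasure (volume.restrict B) := isFiniteMeasure_restrict.2 hBt
  have : IsFiniteMeasure (volume.restrict B') := isFiniteMeasure_restrict.2 hB't
  have : NeZero (volume.restrict B) := ⟨Measure.restrict_eq_zero.not.2 hB.ne'⟩
  have : NeZero (volume.restrict B') := ⟨Measure.restrict_eq_zero.not.2 hB'.ne'⟩
  have hint (S : Set (Euc N)) [IsFiniteMeasure (volume.restrict S)] :
      Integrable u (volume.restrict S) :=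
    (hu.restrict S).integrable (ENNReal.one_le_ofReal.2 hp)
  have hD0 : 0 ≤ D :=
    (norm_nonneg _).trans (hD x (mem_closedBall_self hr.le) y (mem_closedBall_self hr'.le))
  have hvol : (volume B * volume B')⁻¹ * ENNReal.ofReal (D ^ ((N : ℝ) + s * p)) =
      ENNReal.ofReal (D ^ ((N : ℝ) + s * p) / (volume.real B * volume.real B')) := by
    have hBB' : 0 < volume.real B * volume.real B' :=
      mul_pos (ENNReal.toReal_pos hB.ne' hBt) (ENNReal.toReal_pos hB'.ne' hB't)
    rw [ENNReal.ofReal_div_of_pos hBB', ENNReal.ofReal_mul measureReal_nonneg,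
      ofReal_measureReal hBt, ofReal_measureReal hB't, ENNReal.div_eq_inv_mul]
  have henorm := (enorm_average_sub_average_le _ _ (hint B) (hint B') hp).trans
    (ENNReal.rpow_le_rpow (laverage_prod_restrict_enorm_sub_rpow_le (one_pos.trans_le hp) he u
      measurableSet_closedBall measurableSet_closedBall hD) (by positivity))
  rw [hvol, ENNReal.mul_rpow_of_nonneg _ _ (by positivity),
    ENNReal.ofReal_rpow_of_nonneg (by positivity) (by positivity), ← gagSemi,
    Real.enorm_eq_ofReal_abs, ENNReal.ofReal_le_iff_le_toReal
      (ENNReal.mul_ne_top ENNReal.ofReal_ne_top hu_semi), ENNReal.toReal_mul,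
    ENNReal.toReal_ofReal (by positivity)] at henorm
  exact henorm

-- `(3ρ)^(N+sp) / |B(ρ/2)|² = morreyConst N s p ^ p * ρ^(sp-N)`, with `|B(ρ/2)| = (ρ/2)^N |B(1)|`.
def morreyConst (N : ℕ) (s p : ℝ) : ℝ :=
  (3 ^ ((N : ℝ) + s * p) / ((2⁻¹ : ℝ) ^ N * volume.real (ball (0 : Euc N) 1)) ^ 2) ^ (1 / p)

theorem measureReal_unitBall_pos : 0 < volume.real (ball (0 : Euc N) 1) :=
  ENNReal.toReal_pos (measure_ball_pos volume 0 one_pos).ne' measure_ball_lt_top.ne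

theorem morreyConst_pos : 0 < morreyConst N s p := by
  have := measureReal_unitBall_pos (N := N)
  unfold morreyConst
  positivity

theorem abs_setAverage_closedBall_sub_le_morreyConst (hp : 1 ≤ p) (he : 0 ≤ (N : ℝ) + s * p)
    {u : Euc N → ℝ} (hu : MemLp u (ENNReal.ofReal p) volume) (hu_semi : gagSemi N s p u ≠ ⊤)
    {x y : Euc N} {ρ r r' : ℝ} (hρ : 0 < ρ) (hxy : dist x y ≤ ρ) (hr : ρ / 2 ≤ r) (hrρ : r ≤ ρ)
    (hr' : ρ / 2 ≤ r') (hr'ρ : r' ≤ ρ) :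
    |(⨍ ξ in closedBall x r, u ξ) - ⨍ η in closedBall y r', u η| ≤
      morreyConst N s p * (gagSemi N s p u).toReal * ρ ^ (s - N / p) := by
  have hp0 : p ≠ 0 := by positivity
  set ω := volume.real (ball (0 : Euc N) 1)
  set W := (2⁻¹ : ℝ) ^ N * ω * ρ ^ N
  have hω : 0 < ω := measureReal_unitBall_pos
  have hD : ∀ ξ ∈ closedBall x r, ∀ η ∈ closedBall y r', ‖ξ - η‖ ≤ 3 * ρ := by
    intro ξ hξ η hη
    rw [← dist_eq_norm]
    linarith [dist_triangle4 ξ x y η, mem_closedBall.1 hξ, mem_closedBall'.1 hη]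
  have hvol (z : Euc N) {t : ℝ} (ht : ρ / 2 ≤ t) : W ≤ volume.real (closedBall z t) := by
    rw [Measure.addHaar_real_closedBall _ _ (by linarith), finrank_euclideanSpace_fin,
      mul_comm _ ω]
    calc W = ω * (ρ / 2) ^ N := by ring
      _ ≤ ω * t ^ N := by gcongr
  have hpow : ρ ^ ((N : ℝ) + s * p) = ρ ^ (s * p - N) * (ρ ^ N * ρ ^ N) := by
    rw [← pow_add, ← Real.rpow_natCast, ← Real.rpow_add hρ]
    push_cast
    ring_nf
  calc |(⨍ ξ in closedBall x r, u ξ) - ⨍ η in closedBall y r', u η|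
      ≤ ((3 * ρ) ^ ((N : ℝ) + s * p) /
          (volume.real (closedBall x r) * volume.real (closedBall y r'))) ^ (1 / p) *
          (gagSemi N s p u).toReal :=
        abs_setAverage_closedBall_sub_le hp he hu hu_semi (by linarith) (by linarith) hD
    _ ≤ ((3 * ρ) ^ ((N : ℝ) + s * p) / (W * W)) ^ (1 / p) * (gagSemi N s p u).toReal := by
        gcongr
        exacts [hvol x hr, hvol y hr']
    _ = morreyConst N s p * (gagSemi N s p u).toReal * ρ ^ (s - N / p) := by
        have : (3 * ρ) ^ ((N : ℝ) + s * p) / (W * W) =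
            3 ^ ((N : ℝ) + s * p) / ((2⁻¹ : ℝ) ^ N * ω) ^ 2 * ρ ^ (s * p - N) := by
          rw [Real.mul_rpow (by norm_num) hρ.le, hpow]
          simp only [W]
          field_simp
        rw [this, Real.mul_rpow (by positivity) (by positivity), ← Real.rpow_mul hρ.le,
          morreyConst, show (s * p - N) * (1 / p) = s - N / p by field_simp]
        ring

end Gagliardo

theorem abs_sub_le_of_abs_sub_le_of_le_two_mul {A : ℝ → ℝ} {K α : ℝ} (hK : 0 ≤ K) (hα : 0 < α)
    (hA : ∀ r r', 0 < r' → r' ≤ r → r ≤ 2 * r' → |A r' - A r| ≤ K * r ^ α)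
    {r r' : ℝ} (hr' : 0 < r') (hr'r : r' ≤ r) :
    |A r' - A r| ≤ K / (1 - 2 ^ (-α)) * r ^ α := by
  -- `K / (1 - q)` is the fixed point of `C ↦ C * q + K`, the recursion of one halving step.
  set q : ℝ := 2 ^ (-α)
  have hq : q < 1 := Real.rpow_lt_one_of_one_lt_of_neg one_lt_two (neg_lt_zero.2 hα)
  have hq' : 1 - q ≠ 0 := by linarith
  have hKq : K ≤ K / (1 - q) :=
    (le_div_iff₀ (by linarith)).2 (by nlinarith [Real.rpow_nonneg zero_le_two (-α)])
  obtain ⟨n, hn⟩ := pow_unbounded_of_one_lt (r / r') one_lt_two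
  rw [div_lt_iff₀ hr'] at hn
  induction n generalizing r with
  | zero => rw [pow_zero, one_mul] at hn; linarith
  | succ n ih =>
    have hr : 0 < r := hr'.trans_le hr'r
    by_cases hr2 : r ≤ 2 * r'
    · exact (hA r r' hr' hr'r hr2).trans (by gcongr)
    have hhalf : (r / 2) ^ α = q * r ^ α := by
      rw [div_eq_mul_inv, Real.mul_rpow hr.le (by norm_num), Real.inv_rpow zero_le_two,
        ← Real.rpow_neg zero_le_two, mul_comm]
    calc |A r' - A r| ≤ |A r' - A (r / 2)| + |A (r / 2) - A r| := abs_sub_le _ _ _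
      _ ≤ K / (1 - q) * (r / 2) ^ α + K * r ^ α :=
          add_le_add (ih (by linarith) (by rw [pow_succ] at hn; linarith))
            (hA r (r / 2) (by positivity) (by linarith) (by linarith))
      _ = K / (1 - q) * r ^ α := by
          rw [hhalf]
          field_simp
          ring

theorem exists_tendsto_nhdsGT_of_abs_sub_le {A : ℝ → ℝ} {M α : ℝ} (hα : 0 < α)
    (hA : ∀ r r', 0 < r' → r' ≤ r → |A r' - A r| ≤ M * r ^ α) :
    ∃ L, Tendsto A (𝓝[>] 0) (𝓝 L) ∧ ∀ r, 0 < r → |L - A r| ≤ M * r ^ α := by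
  have hM : Tendsto (fun r => M * r ^ α) (𝓝[>] 0) (𝓝 0) := by
    simpa [Real.zero_rpow hα.ne'] using
      ((Real.continuousAt_rpow_const 0 α (.inr hα.le)).tendsto.mono_left
        nhdsWithin_le_nhds).const_mul M
  have hcauchy : Cauchy ((𝓝[>] (0 : ℝ)).map A) := by
    refine cauchy_map_iff'.2 (Metric.uniformity_basis_dist.tendsto_right_iff.2 fun ε hε => ?_)
    have hsmall : ∀ᶠ r in 𝓝[>] (0 : ℝ), 0 < r ∧ M * r ^ α < ε :=
      eventually_mem_nhdsWithin.and (hM.eventually (gt_mem_nhds hε))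
    filter_upwards [hsmall.prod_mk hsmall] with ⟨r₁, r₂⟩ ⟨⟨h₁, hε₁⟩, h₂, hε₂⟩
    rw [Real.dist_eq]
    rcases le_total r₁ r₂ with h | h
    · exact (hA r₂ r₁ h₁ h).trans_lt hε₂
    · exact (abs_sub_comm _ _).trans_lt ((hA r₁ r₂ h₂ h).trans_lt hε₁)
  obtain ⟨L, hL⟩ := cauchy_map_iff_exists_tendsto.1 hcauchy
  refine ⟨L, hL, fun r hr => ?_⟩
  refine le_of_tendsto ((hL.sub_const (A r)).abs) ?_
  filter_upwards [eventually_mem_nhdsWithin, Ioo_mem_nhdsGT hr] with r' hr' hr'r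
  exact hA r r' hr' hr'r.2.le

theorem exists_holder_tendsto_of_abs_sub_le {X : Type*} [MetricSpace X] {A : X → ℝ → ℝ}
    {K α : ℝ} (hK : 0 ≤ K) (hα : 0 < α)
    (hA : ∀ x y ρ r r', 0 < ρ → dist x y ≤ ρ → ρ / 2 ≤ r → r ≤ ρ → ρ / 2 ≤ r' → r' ≤ ρ →
      |A x r - A y r'| ≤ K * ρ ^ α) :
    ∃ f : X → ℝ, (∀ x, Tendsto (A x) (𝓝[>] 0) (𝓝 (f x))) ∧
      ∀ x y, x ≠ y → |f x - f y| ≤ (2 / (1 - 2 ^ (-α)) + 1) * K * dist x y ^ α := by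
  have hscale (x : X) {r r' : ℝ} (hr' : 0 < r') (hr'r : r' ≤ r) :
      |A x r' - A x r| ≤ K / (1 - 2 ^ (-α)) * r ^ α :=
    abs_sub_le_of_abs_sub_le_of_le_two_mul hK hα
      (fun r r' hr' hr'r hr2 => hA x x r r' r (hr'.trans_le hr'r)
        (by simp [(hr'.trans_le hr'r).le]) (by linarith) hr'r (by linarith) le_rfl) hr' hr'r
  choose f hf using fun x => exists_tendsto_nhdsGT_of_abs_sub_le hα fun r r' => hscale x (r := r)
  refine ⟨f, fun x => (hf x).1, fun x y hxy => ?_⟩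
  set d := dist x y
  have hd : 0 < d := dist_pos.2 hxy
  calc |f x - f y| ≤ |f x - A x d| + (|A x d - A y d| + |A y d - f y|) :=
        (abs_sub_le _ (A x d) _).trans (by gcongr; exact abs_sub_le _ (A y d) _)
    _ ≤ K / (1 - 2 ^ (-α)) * d ^ α + (K * d ^ α + K / (1 - 2 ^ (-α)) * d ^ α) := by
        gcongr
        · exact (hf x).2 d hd
        · exact hA x y d d d hd le_rfl (by linarith) le_rfl (by linarith) le_rfl
        · rw [abs_sub_comm]; exact (hf y).2 d hd
    _ = (2 / (1 - 2 ^ (-α)) + 1) * K * d ^ α := by ring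

theorem continuous_of_abs_sub_le_rpow {X : Type*} [MetricSpace X] {f : X → ℝ} {C α : ℝ}
    (hα : 0 < α) (hf : ∀ x y, x ≠ y → |f x - f y| ≤ C * dist x y ^ α) : Continuous f := by
  refine continuous_iff_continuousAt.2 fun x => tendsto_iff_dist_tendsto_zero.2 ?_
  have hlim : Tendsto (fun y => C * dist y x ^ α) (𝓝 x) (𝓝 0) := by
    have hdist : Tendsto (fun y => dist y x) (𝓝 x) (𝓝 0) := by
      simpa using (continuous_id.dist (continuous_const (y := x))).tendsto x
    simpa [Real.zero_rpow hα.ne'] using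
      ((Real.continuousAt_rpow_const 0 α (.inr hα.le)).tendsto.comp hdist).const_mul C
  refine squeeze_zero (fun _ => dist_nonneg) (fun y => ?_) hlim
  rcases eq_or_ne y x with rfl | hyx
  · simp [Real.zero_rpow hα.ne']
  · exact hf y x hyx

theorem ae_eq_of_tendsto_setAverage_closedBall {X : Type*} [MetricSpace X] [MeasurableSpace X]
    [BorelSpace X] [SecondCountableTopology X] {μ : Measure X} [IsLocallyFiniteMeasure μ]
    [IsUnifLocDoublingMeasure μ] {u f : X → ℝ} (hu : LocallyIntegrable u μ)
    (hf : ∀ x, Tendsto (fun r => ⨍ y in closedBall x r, u y ∂μ) (𝓝[>] 0) (𝓝 (f x))) :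
    f =ᵐ[μ] u := by
  filter_upwards [IsUnifLocDoublingMeasure.ae_tendsto_average μ hu 1] with x hx
  refine tendsto_nhds_unique (hf x) (hx (fun _ => x) id tendsto_id ?_)
  filter_upwards [eventually_mem_nhdsWithin] with r hr
  simpa using (Set.mem_Ioi.1 hr).le

theorem fractional_morrey_general (N : ℕ) (Ω : Set (Euc N)) (s p : ℝ) (hp : 1 ≤ p)
    (hsp : (N : ℝ) < s * p) :
    ∃ C : ℝ, 0 < C ∧ ∀ u : Euc N → ℝ, memW0 N s p Ω u →
      ∃ ut : Euc N → ℝ, Continuous ut ∧ ut =ᵐ[volume] u ∧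
        ∀ x ∈ Ω, ∀ y ∈ Ω, x ≠ y →
          |ut x - ut y| ≤ C * (gagSemi N s p u).toReal * ‖x - y‖ ^ (s - N / p) := by
  have he : 0 ≤ (N : ℝ) + s * p := by linarith [N.cast_nonneg (α := ℝ)]
  have hα : 0 < s - N / p := by rw [sub_pos, div_lt_iff₀ (by linarith)]; exact hsp
  have hq : (2 : ℝ) ^ (-(s - N / p)) < 1 :=
    Real.rpow_lt_one_of_one_lt_of_neg one_lt_two (neg_lt_zero.2 hα)
  refine ⟨(2 / (1 - 2 ^ (-(s - N / p))) + 1) * morreyConst N s p,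
    mul_pos (by linarith [div_pos two_pos (sub_pos.2 hq)]) morreyConst_pos, ?_⟩
  rintro u ⟨hu, hu_semi, -⟩
  obtain ⟨ut, hlim, hholder⟩ := exists_holder_tendsto_of_abs_sub_le
    (A := fun x r => ⨍ ξ in closedBall x r, u ξ)
    (mul_nonneg morreyConst_pos.le ENNReal.toReal_nonneg) hα
    fun _ _ _ _ _ hρ hxy hr hrρ hr' hr'ρ =>
      abs_setAverage_closedBall_sub_le_morreyConst hp he hu hu_semi.ne hρ hxy hr hrρ hr' hr'ρ
  refine ⟨ut, continuous_of_abs_sub_le_rpow hα hholder,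
    ae_eq_of_tendsto_setAverage_closedBall (hu.locallyIntegrable (ENNReal.one_le_ofReal.2 hp))
      hlim, fun x _ y _ hxy => ?_⟩
  simpa only [dist_eq_norm, mul_assoc] using hholder x y hxy

/-- Fractional Morrey estimate: if `sp > N` and `α = s - N/p`, every
`u ∈ W^{s,p}_0(Ω)` (with `Ω` bounded open) has a continuous representative `ũ` whose
`α`-Hölder seminorm on `Ω` is controlled by `[u]_{s,p}`, with a constant independent of `u`. -/
theorem fractional_morrey (N : ℕ) (Ω : Set (Euc N)) (hΩo : IsOpen Ω)
    (hΩb : Bornology.IsBounded Ω) (s p : ℝ) (hs : 0 < s) (hs1 : s < 1) (hp : 1 ≤ p)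
    (hsp : (N : ℝ) < s * p) :
    ∃ C : ℝ, 0 < C ∧ ∀ u : Euc N → ℝ, memW0 N s p Ω u →
      ∃ ut : Euc N → ℝ, Continuous ut ∧ ut =ᵐ[volume] u ∧
        ∀ x ∈ Ω, ∀ y ∈ Ω, x ≠ y →
          |ut x - ut y| ≤ C * (gagSemi N s p u).toReal * ‖x - y‖ ^ (s - N / p) :=
  fractional_morrey_general N Ω s p hp hsp
end
end

section
/- Let E be a real Banach space and let A ⊆ E be a nonempty compact symmetric set (A = −A) with 0 ∉ A. Then there exists a symmetric open neighborhood N of A (N = −N, A ⊆ N) with 0 ∉ closure(N) such that γ(closure(N)) = γ(A), i.e. the Krasnoselskii genus of the closure of N equals the genus of A. -/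
/-!
If `genus A = m < ∞`, a continuous odd map `φ : A → ℝ^m ∖ {0}` extends by Tietze to a continuous
map `g` on `E`, and `ψ x = (g x - g (-x)) / 2` is an odd extension. By compactness `‖ψ‖` is
bounded below on `A` by some `c > 0`, and `{x | c / 2 < ‖ψ x‖}` is a symmetric open
neighbourhood of `A` on whose closure `ψ` still does not vanish, so its closure has genus at most
`m`; it avoids `0` because an odd map vanishes there. If `genus A = ∞`, the same construction with
`ψ = id` gives a neighbourhood, and monotonicity forces the genus of its closure to be `∞` too.
-/

open Filter Topology

noncomputable section

/-- The Krasnoselskii genus of a set `A` in a topological vector-like space: the least `m`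
such that there is a continuous odd map `A → ℝ^m ∖ {0}`, and `∞` (`⊤`) if no such `m` exists. -/
def genus {E : Type*} [TopologicalSpace E] [Neg E] (A : Set E) : ℕ∞ :=
  sInf ((fun m : ℕ => (m : ℕ∞)) ''
    {m : ℕ | ∃ φ : E → (Fin m → ℝ), ContinuousOn φ A ∧
      (∀ x ∈ A, φ (-x) = -φ x) ∧ ∀ x ∈ A, φ x ≠ 0})

section Genus

variable {E : Type*} [TopologicalSpace E] [Neg E]

theorem genus_le_of_continuousOn {A : Set E} {m : ℕ} {φ : E → Fin m → ℝ}
    (hφ : ContinuousOn φ A) (hodd : ∀ x ∈ A, φ (-x) = -φ x) (hne : ∀ x ∈ A, φ x ≠ 0) :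
    genus A ≤ m :=
  sInf_le ⟨m, ⟨φ, hφ, hodd, hne⟩, rfl⟩

theorem genus_mono {A B : Set E} (h : A ⊆ B) : genus A ≤ genus B := by
  apply sInf_le_sInf
  rintro _ ⟨m, ⟨φ, hφ, hodd, hne⟩, rfl⟩
  exact ⟨m, ⟨φ, hφ.mono h, fun x hx => hodd x (h hx), fun x hx => hne x (h hx)⟩, rfl⟩

theorem exists_continuousOn_eq_genus {A : Set E} (hA : genus A ≠ ⊤) :
    ∃ (m : ℕ) (φ : E → Fin m → ℝ), ContinuousOn φ A ∧ (∀ x ∈ A, φ (-x) = -φ x) ∧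
      (∀ x ∈ A, φ x ≠ 0) ∧ genus A = m := by
  have hne : ((fun m : ℕ => (m : ℕ∞)) '' {m : ℕ | ∃ φ : E → (Fin m → ℝ), ContinuousOn φ A ∧
      (∀ x ∈ A, φ (-x) = -φ x) ∧ ∀ x ∈ A, φ x ≠ 0}).Nonempty :=
    Set.nonempty_iff_ne_empty.2 fun h => hA (by rw [genus, h, sInf_empty])
  obtain ⟨m, ⟨φ, hφ, hodd, hφne⟩, hm⟩ := csInf_mem hne
  exact ⟨m, φ, hφ, hodd, hφne, hm.symm⟩

end Genus

universe u v

theorem exists_continuous_odd_extension {X : Type u} {F : Type v} [TopologicalSpace X]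
    [NormalSpace X] [InvolutiveNeg X] [ContinuousNeg X] [AddCommGroup F] [Module ℝ F]
    [TopologicalSpace F] [IsTopologicalAddGroup F] [ContinuousSMul ℝ F] [TietzeExtension.{u, v} F]
    {A : Set X} (hA : IsClosed A) (hsymm : -A = A) {φ : X → F} (hφ : ContinuousOn φ A)
    (hodd : ∀ x ∈ A, φ (-x) = -φ x) :
    ∃ ψ : X → F, Continuous ψ ∧ ψ.Odd ∧ Set.EqOn ψ φ A := by
  obtain ⟨g, hg⟩ := ContinuousMap.exists_restrict_eq hA ⟨A.domRestrict φ, hφ.domRestrict⟩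
  have hgφ : Set.EqOn g φ A := fun x hx => congr($hg ⟨x, hx⟩)
  refine ⟨fun x => (2 : ℝ)⁻¹ • (g x - g (-x)), by fun_prop, fun x => ?_, fun x hx => ?_⟩
  · simp only [neg_neg, ← smul_neg, neg_sub]
  · have hnx : -x ∈ A := by rw [← hsymm]; simpa using hx
    simp only [hgφ hx, hgφ hnx, hodd x hx, sub_neg_eq_add, ← two_smul ℝ (φ x), smul_smul]
    norm_num

theorem exists_isOpen_neg_eq_forall_mem_closure_ne_zero {X F : Type*} [TopologicalSpace X]
    [InvolutiveNeg X] [NormedAddGroup F] {A : Set X} (hA : IsCompact A) {ψ : X → F}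
    (hψ : Continuous ψ) (hodd : ψ.Odd) (hne : ∀ x ∈ A, ψ x ≠ 0) :
    ∃ U : Set X, IsOpen U ∧ A ⊆ U ∧ -U = U ∧ ∀ x ∈ closure U, ψ x ≠ 0 := by
  obtain ⟨c, hc, hcA⟩ := hA.exists_forall_le' hψ.norm.continuousOn
    fun x hx => norm_pos_iff.2 (hne x hx)
  refine ⟨{x | c / 2 < ‖ψ x‖}, isOpen_lt continuous_const hψ.norm,
    fun x hx => (half_lt_self hc).trans_le (hcA x hx), ?_, fun x hx hx0 => ?_⟩
  · ext x
    simp only [Set.mem_neg, Set.mem_ofPred_eq, hodd x, norm_neg]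
  · have := closure_lt_subset_le continuous_const hψ.norm hx
    simp only [Set.mem_ofPred_eq, hx0, norm_zero] at this
    linarith

theorem genus_of_neighborhood_general {E : Type*} [NormedAddCommGroup E] (A : Set E) (hc : IsCompact A)
    (hsym : -A = A) (h0 : (0 : E) ∉ A) :
    ∃ U : Set E, IsOpen U ∧ A ⊆ U ∧ -U = U ∧ (0 : E) ∉ closure U ∧
      genus (closure U) = genus A := by
  obtain hA | hA := eq_or_ne (genus A) ⊤
  · obtain ⟨U, hU, hAU, hUsymm, hUne⟩ := exists_isOpen_neg_eq_forall_mem_closure_ne_zero hc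
      continuous_id (fun _ => rfl) fun x hx hx0 => h0 (hx0 ▸ hx)
    refine ⟨U, hU, hAU, hUsymm, fun h => hUne 0 h rfl, ?_⟩
    rw [hA, ← top_le_iff, ← hA]
    exact genus_mono (hAU.trans subset_closure)
  · obtain ⟨m, φ, hφ, hφodd, hφne, hm⟩ := exists_continuousOn_eq_genus hA
    obtain ⟨ψ, hψ, hψodd, hψφ⟩ := exists_continuous_odd_extension hc.isClosed hsym hφ hφodd
    obtain ⟨U, hU, hAU, hUsymm, hUne⟩ := exists_isOpen_neg_eq_forall_mem_closure_ne_zero hc hψ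
      hψodd fun x hx => hψφ hx ▸ hφne x hx
    refine ⟨U, hU, hAU, hUsymm, fun h => hUne 0 h hψodd.map_zero,
      le_antisymm ?_ (genus_mono (hAU.trans subset_closure))⟩
    exact hm ▸ genus_le_of_continuousOn hψ.continuousOn (fun x _ => hψodd x) hUne

/-- For a nonempty compact symmetric set `A` with `0 ∉ A` in a real Banach
space, there is a symmetric open neighborhood `U` of `A` with `0 ∉ closure U` whose closure has
the same Krasnoselskii genus as `A`. -/
theorem genus_of_neighborhood {E : Type*} [NormedAddCommGroup E] [NormedSpace ℝ E]
    [CompleteSpace E] (A : Set E) (hne : A.Nonempty) (hc : IsCompact A)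
    (hsym : -A = A) (h0 : (0 : E) ∉ A) :
    ∃ U : Set E, IsOpen U ∧ A ⊆ U ∧ -U = U ∧ (0 : E) ∉ closure U ∧
      genus (closure U) = genus A :=
  genus_of_neighborhood_general A hc hsym h0
end
end

section
/- Let Ω ⊆ ℝ^N be a bounded open set, α ∈ (0,1), and p ∈ [1,∞) with αp > N. If v ∈ C^α_0(Ω) (v is continuous on ℝ^N, vanishes outside Ω, and ‖D^α v‖_{L^∞(ℝ^N×ℝ^N)} < ∞), then D^α v ∈ L^p(ℝ^N×ℝ^N), and there is a constant C depending only on N, α, p and Ω such that ‖D^α v‖_{L^p(ℝ^N×ℝ^N)} ≤ C ‖D^α v‖_{L^∞(ℝ^N×ℝ^N)}. -/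
open MeasureTheory ENNReal Filter Topology

noncomputable section

/-- The `L^∞` norm (supremum) of the Hölder quotient `D^α v(x,y) = (v x - v y)/|x-y|^α`. -/
def holderSemi (N : ℕ) (α : ℝ) (v : Euc N → ℝ) : ℝ≥0∞ :=
  ⨆ (x : Euc N) (y : Euc N) (_ : x ≠ y), ENNReal.ofReal (|v x - v y| / ‖x - y‖ ^ α)

/-- The `L^p(ℝ^N×ℝ^N)` norm of the Hölder quotient `D^α v`. -/
def holderLp (N : ℕ) (α p : ℝ) (v : Euc N → ℝ) : ℝ≥0∞ :=
  (∫⁻ q : Euc N × Euc N,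
    ENNReal.ofReal (|v q.1 - v q.2| ^ p / ‖q.1 - q.2‖ ^ (α * p)) ∂volume) ^ (1 / p)

/-- Membership in `C_0(Ω)`: continuous on `ℝ^N` and vanishing outside `Ω`. -/
def memC0 (N : ℕ) (Ω : Set (Euc N)) (v : Euc N → ℝ) : Prop :=
  Continuous v ∧ ∀ x ∉ Ω, v x = 0

/-- Membership in `C^α_0(Ω)`: continuous, vanishing outside `Ω`, with finite `α`-Hölder
seminorm `‖D^α v‖_{L^∞(ℝ^N×ℝ^N)}`. -/
def memCalpha0 (N : ℕ) (α : ℝ) (Ω : Set (Euc N)) (v : Euc N → ℝ) : Prop :=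
  memC0 N Ω v ∧ holderSemi N α v < ⊤

/-! Let `M = ‖D^α v‖_∞` and let `v` vanish outside the ball `B = B(0, R)`. A point at distance
`2R` from a point of `B` lies outside `B`, so `|v x - v y| ≤ M min(|x - y|, 2R)^α`. Hence
`|D^α v(x, y)|^p ≤ M^p ((1 + 2R) / (1 + |x - y|))^{αp}`, while `D^α v(x, y) = 0` unless `x ∈ B`
or `y ∈ B`. Integrating first in the variable that need not lie in `B`, translation invariance
gives `‖D^α v‖_p^p ≤ 2 |B| M^p (1 + 2R)^{αp} ∫ (1 + |z|)^{-αp} dz`, and this integral is finite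
precisely because `αp > N`. -/

section Translation

variable {G : Type*} [MeasurableSpace G] [AddGroup G] [MeasurableAdd G] [MeasurableNeg G]
  [MeasurableSub₂ G] {μ : Measure G} [SFinite μ] {B : Set G} {K : G → ℝ≥0∞}

theorem lintegral_prod_indicator_fst_mul_sub [μ.IsAddLeftInvariant] [μ.IsNegInvariant]
    (hB : MeasurableSet B) (hK : Measurable K) :
    ∫⁻ q, B.indicator 1 q.1 * K (q.1 - q.2) ∂μ.prod μ = μ B * ∫⁻ z, K z ∂μ := by
  have hslice : ∀ x, ∫⁻ y, B.indicator 1 x * K (x - y) ∂μ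
      = B.indicator 1 x * ∫⁻ z, K z ∂μ :=
    fun x ↦ by rw [lintegral_const_mul _ (by fun_prop), lintegral_sub_left_eq_self]
  rw [lintegral_prod _ (by fun_prop)]
  simp only [hslice]
  rw [lintegral_mul_const _ (measurable_one.indicator hB), lintegral_indicator_one hB]

theorem lintegral_prod_indicator_snd_mul_sub [μ.IsAddRightInvariant]
    (hB : MeasurableSet B) (hK : Measurable K) :
    ∫⁻ q, B.indicator 1 q.2 * K (q.1 - q.2) ∂μ.prod μ = μ B * ∫⁻ z, K z ∂μ := by
  have hslice : ∀ y, ∫⁻ x, B.indicator 1 y * K (x - y) ∂μ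
      = B.indicator 1 y * ∫⁻ z, K z ∂μ :=
    fun y ↦ by rw [lintegral_const_mul _ (by fun_prop), lintegral_sub_right_eq_self]
  rw [lintegral_prod_symm _ (by fun_prop)]
  simp only [hslice]
  rw [lintegral_mul_const _ (measurable_one.indicator hB), lintegral_indicator_one hB]

end Translation

theorem min_div_le_one_add_div {t a : ℝ} (ht : 0 < t) :
    min t a / t ≤ (1 + a) / (1 + t) := by
  rw [div_le_div_iff₀ ht (by linarith)]
  rcases le_total t a with h | h
  · rw [min_eq_left h]; nlinarith
  · rw [min_eq_right h]; nlinarith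

section HolderVanishing

variable {E : Type*} [NormedAddCommGroup E] [NormedSpace ℝ E] {v : E → ℝ} {M α R : ℝ}

theorem abs_le_of_two_mul_le_norm_sub (hv : ∀ x y, |v x - v y| ≤ M * ‖x - y‖ ^ α)
    (hvR : ∀ x ∉ Metric.ball (0 : E) R, v x = 0) (hM : 0 ≤ M) (hR : 0 < R)
    {x y : E} (hxy : 2 * R ≤ ‖x - y‖) :
    |v x| ≤ M * (2 * R) ^ α := by
  by_cases hx : x ∈ Metric.ball (0 : E) R
  swap
  · rw [hvR x hx, abs_zero]; positivity
  set z := x + (2 * R / ‖x - y‖) • (y - x)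
  have hxz : ‖x - z‖ = 2 * R := by
    have ht : 0 < ‖x - y‖ := by linarith
    rw [show x - z = (2 * R / ‖x - y‖) • (x - y) by
        rw [sub_add_cancel_left, ← smul_neg, neg_sub],
      norm_smul, Real.norm_of_nonneg (by positivity), div_mul_cancel₀ _ ht.ne']
  have hz : z ∉ Metric.ball (0 : E) R := by
    rw [mem_ball_zero_iff] at hx ⊢
    have := norm_sub_le x z
    linarith
  simpa [hvR z hz, hxz] using hv x z

theorem abs_sub_le_mul_min_rpow (hv : ∀ x y, |v x - v y| ≤ M * ‖x - y‖ ^ α)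
    (hvR : ∀ x ∉ Metric.ball (0 : E) R, v x = 0) (hM : 0 ≤ M) (hR : 0 < R)
    (x y : E) : |v x - v y| ≤ M * min ‖x - y‖ (2 * R) ^ α := by
  rcases le_total ‖x - y‖ (2 * R) with h | h
  · rw [min_eq_left h]; exact hv x y
  rw [min_eq_right h]
  have hout : x ∉ Metric.ball (0 : E) R ∨ y ∉ Metric.ball (0 : E) R := by
    by_contra! hin
    simp only [mem_ball_zero_iff] at hin
    have := norm_sub_le x y
    linarith
  rcases hout with hx | hy
  · rw [hvR x hx, zero_sub, abs_neg]
    exact abs_le_of_two_mul_le_norm_sub hv hvR hM hR (by rwa [norm_sub_rev])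
  · rw [hvR y hy, sub_zero]
    exact abs_le_of_two_mul_le_norm_sub hv hvR hM hR h

theorem abs_sub_rpow_div_norm_rpow_le (hv : ∀ x y, |v x - v y| ≤ M * ‖x - y‖ ^ α)
    (hvR : ∀ x ∉ Metric.ball (0 : E) R, v x = 0) (hM : 0 ≤ M) (hR : 0 < R)
    {p : ℝ} (hp : 0 < p) (hαp : 0 ≤ α * p) (x y : E) :
    |v x - v y| ^ p / ‖x - y‖ ^ (α * p)
      ≤ M ^ p * (1 + 2 * R) ^ (α * p) * (1 + ‖x - y‖) ^ (-(α * p)) := by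
  rcases eq_or_ne x y with rfl | hxy
  · rw [sub_self, abs_zero, Real.zero_rpow hp.ne', zero_div]; positivity
  have ht : 0 < ‖x - y‖ := norm_pos_iff.mpr (sub_ne_zero.mpr hxy)
  calc |v x - v y| ^ p / ‖x - y‖ ^ (α * p)
      ≤ (M * min ‖x - y‖ (2 * R) ^ α) ^ p / ‖x - y‖ ^ (α * p) := by
        gcongr; exact abs_sub_le_mul_min_rpow hv hvR hM hR x y
    _ = M ^ p * (min ‖x - y‖ (2 * R) / ‖x - y‖) ^ (α * p) := by
        rw [Real.mul_rpow hM (by positivity), ← Real.rpow_mul (by positivity),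
          Real.div_rpow (by positivity) ht.le, mul_div_assoc]
    _ ≤ M ^ p * ((1 + 2 * R) / (1 + ‖x - y‖)) ^ (α * p) := by
        gcongr M ^ p * ?_ ^ (α * p); exact min_div_le_one_add_div ht
    _ = M ^ p * (1 + 2 * R) ^ (α * p) * (1 + ‖x - y‖) ^ (-(α * p)) := by
        rw [Real.div_rpow (by positivity) (by positivity), Real.rpow_neg (by positivity)]
        ring

end HolderVanishing

def holderQuotientConst {E : Type*} [NormedAddCommGroup E] [MeasurableSpace E] (μ : Measure E)
    (α p R : ℝ) : ℝ≥0∞ :=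
  2 * μ (Metric.ball 0 R) * ENNReal.ofReal ((1 + 2 * R) ^ (α * p)) *
    ∫⁻ z, ENNReal.ofReal ((1 + ‖z‖) ^ (-(α * p))) ∂μ

section Integral

variable {E : Type*} [NormedAddCommGroup E] [NormedSpace ℝ E] [MeasurableSpace E] [BorelSpace E]
  [FiniteDimensional ℝ E] (μ : Measure E) [μ.IsAddHaarMeasure] {v : E → ℝ} {M α p R : ℝ}

theorem holderQuotientConst_ne_top (hαp : (Module.finrank ℝ E : ℝ) < α * p) :
    holderQuotientConst μ α p R ≠ ⊤ :=
  ENNReal.mul_ne_top (ENNReal.mul_ne_top (ENNReal.mul_ne_top (by simp) measure_ball_lt_top.ne)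
    ENNReal.ofReal_ne_top) (finite_integral_one_add_norm hαp).ne

theorem lintegral_abs_sub_rpow_div_norm_rpow_le (hv : ∀ x y, |v x - v y| ≤ M * ‖x - y‖ ^ α)
    (hvR : ∀ x ∉ Metric.ball (0 : E) R, v x = 0) (hM : 0 ≤ M) (hR : 0 < R)
    (hp : 0 < p) (hαp : 0 ≤ α * p) :
    ∫⁻ q, ENNReal.ofReal (|v q.1 - v q.2| ^ p / ‖q.1 - q.2‖ ^ (α * p)) ∂μ.prod μ
      ≤ ENNReal.ofReal (M ^ p) * holderQuotientConst μ α p R := by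
  set B := Metric.ball (0 : E) R
  set c := (1 + 2 * R) ^ (α * p)
  set K : E → ℝ≥0∞ := fun z ↦ ENNReal.ofReal ((1 + ‖z‖) ^ (-(α * p)))
  have hK : Measurable K := by fun_prop
  have hB : MeasurableSet B := measurableSet_ball
  have hpointwise : ∀ q : E × E,
      ENNReal.ofReal (|v q.1 - v q.2| ^ p / ‖q.1 - q.2‖ ^ (α * p))
        ≤ ENNReal.ofReal (M ^ p * c) *
          ((B.indicator 1 q.1 + B.indicator 1 q.2) * K (q.1 - q.2)) := by
    rintro ⟨x, y⟩
    by_cases hxy : x ∈ B ∨ y ∈ B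
    · have hind : (1 : ℝ≥0∞) ≤ B.indicator 1 x + B.indicator 1 y := by
        rcases hxy with hx | hy
        · simp [Set.indicator_of_mem hx]
        · simp [Set.indicator_of_mem hy]
      calc ENNReal.ofReal (|v x - v y| ^ p / ‖x - y‖ ^ (α * p))
          ≤ ENNReal.ofReal (M ^ p * c) * K (x - y) := by
            rw [← ENNReal.ofReal_mul (by positivity)]
            exact ENNReal.ofReal_le_ofReal
              (abs_sub_rpow_div_norm_rpow_le hv hvR hM hR hp hαp x y)
        _ ≤ _ := by gcongr; exact le_mul_of_one_le_left (by positivity) hind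
    · push Not at hxy
      simp [hvR x hxy.1, hvR y hxy.2, Real.zero_rpow hp.ne']
  calc ∫⁻ q, ENNReal.ofReal (|v q.1 - v q.2| ^ p / ‖q.1 - q.2‖ ^ (α * p)) ∂μ.prod μ
      ≤ ∫⁻ q, ENNReal.ofReal (M ^ p * c) *
          ((B.indicator 1 q.1 + B.indicator 1 q.2) * K (q.1 - q.2)) ∂μ.prod μ :=
        lintegral_mono hpointwise
    _ = ENNReal.ofReal (M ^ p * c) * (μ B * ∫⁻ z, K z ∂μ + μ B * ∫⁻ z, K z ∂μ) := by
        simp_rw [add_mul]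
        rw [lintegral_const_mul' _ _ ENNReal.ofReal_ne_top, lintegral_add_left (by fun_prop),
          lintegral_prod_indicator_fst_mul_sub hB hK, lintegral_prod_indicator_snd_mul_sub hB hK]
    _ = _ := by
        rw [ENNReal.ofReal_mul (by positivity), holderQuotientConst]
        ring

end Integral

theorem abs_sub_le_holderSemi_toReal_mul {N : ℕ} {α : ℝ} {v : Euc N → ℝ}
    (hS : holderSemi N α v ≠ ⊤) (x y : Euc N) :
    |v x - v y| ≤ (holderSemi N α v).toReal * ‖x - y‖ ^ α := by
  rcases eq_or_ne x y with rfl | hxy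
  · simp only [sub_self, abs_zero, norm_zero]; positivity
  have hquot : ENNReal.ofReal (|v x - v y| / ‖x - y‖ ^ α) ≤ holderSemi N α v :=
    le_iSup₂_of_le x y (le_iSup_of_le hxy le_rfl)
  rw [← div_le_iff₀ (by positivity [norm_pos_iff.mpr (sub_ne_zero.mpr hxy)])]
  exact (ENNReal.ofReal_le_iff_le_toReal hS).mp hquot

theorem holderLp_le {N : ℕ} {α p R : ℝ} {v : Euc N → ℝ} (hp : 0 < p) (hαp : 0 ≤ α * p)
    (hR : 0 < R) (hvR : ∀ x ∉ Metric.ball 0 R, v x = 0) (hS : holderSemi N α v ≠ ⊤) :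
    holderLp N α p v
      ≤ holderQuotientConst (volume : Measure (Euc N)) α p R ^ (1 / p) * holderSemi N α v := by
  have hp' : 0 ≤ 1 / p := by positivity
  calc holderLp N α p v
      ≤ (ENNReal.ofReal ((holderSemi N α v).toReal ^ p) *
          holderQuotientConst (volume : Measure (Euc N)) α p R) ^ (1 / p) := by
        rw [holderLp, Measure.volume_eq_prod]
        gcongr
        exact lintegral_abs_sub_rpow_div_norm_rpow_le volume (abs_sub_le_holderSemi_toReal_mul hS)
          hvR ENNReal.toReal_nonneg hR hp hαp
    _ = _ := by
        rw [ENNReal.mul_rpow_of_nonneg _ _ hp', ← ENNReal.ofReal_rpow_of_nonneg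
          ENNReal.toReal_nonneg hp.le, ← ENNReal.rpow_mul, mul_one_div_cancel hp.ne',
          ENNReal.rpow_one, ENNReal.ofReal_toReal hS, mul_comm]

theorem holder_quotient_Lp_bound_general (N : ℕ) (Ω : Set (Euc N)) (hΩb : Bornology.IsBounded Ω)
    (α p : ℝ) (hp : 1 ≤ p) (hαp : (N : ℝ) < α * p) :
    ∃ C : ℝ, 0 < C ∧ ∀ v : Euc N → ℝ, memCalpha0 N α Ω v →
      holderLp N α p v < ⊤ ∧
      holderLp N α p v ≤ ENNReal.ofReal C * holderSemi N α v := by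
  have hp0 : 0 < p := one_pos.trans_le hp
  obtain ⟨R, hR, hΩR⟩ := hΩb.subset_ball_lt 0 0
  set D := holderQuotientConst (volume : Measure (Euc N)) α p R ^ (1 / p)
  have hD : D ≠ ⊤ := ENNReal.rpow_ne_top_of_nonneg (by positivity)
    (holderQuotientConst_ne_top volume (by simpa using hαp))
  refine ⟨D.toReal + 1, by positivity, fun v ⟨⟨_, hv0⟩, hS⟩ ↦ ?_⟩
  have hbound : holderLp N α p v ≤ D * holderSemi N α v :=
    holderLp_le hp0 ((Nat.cast_nonneg N).trans hαp.le) hR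
      (fun x hx ↦ hv0 x fun hxΩ ↦ hx (hΩR hxΩ)) hS.ne
  refine ⟨hbound.trans_lt (ENNReal.mul_lt_top hD.lt_top hS), hbound.trans ?_⟩
  gcongr
  exact (ENNReal.le_ofReal_iff_toReal_le hD (by positivity)).mpr
    (le_add_of_nonneg_right zero_le_one)

/-- If `αp > N` and `v ∈ C^α_0(Ω)` with `Ω` bounded open, then
`D^α v ∈ L^p(ℝ^N×ℝ^N)` and `‖D^α v‖_{L^p} ≤ C ‖D^α v‖_{L^∞}` with `C = C(N,α,p,Ω)`. -/
theorem holder_quotient_Lp_bound (N : ℕ) (Ω : Set (Euc N)) (hΩo : IsOpen Ω)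
    (hΩb : Bornology.IsBounded Ω) (α p : ℝ) (hα : 0 < α) (hα1 : α < 1)
    (hp : 1 ≤ p) (hαp : (N : ℝ) < α * p) :
    ∃ C : ℝ, 0 < C ∧ ∀ v : Euc N → ℝ, memCalpha0 N α Ω v →
      holderLp N α p v < ⊤ ∧
      holderLp N α p v ≤ ENNReal.ofReal C * holderSemi N α v :=
  holder_quotient_Lp_bound_general N Ω hΩb α p hp hαp
end
end

section
/- Let α ∈ (0,1), let p_n → ∞ be a sequence in [1,∞), and let v_n, v : ℝ^N → ℝ be continuous functions with v_n → v uniformly on ℝ^N. Then ‖D^α v‖_{L^∞(ℝ^N×ℝ^N)} ≤ liminf_{n→∞} ‖D^α v_n‖_{L^{p_n}(ℝ^N×ℝ^N)} (where both sides may be infinite). -/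
open MeasureTheory ENNReal Filter Topology

noncomputable section

/-!
If `a < |v x - v y| / ‖x - y‖ ^ α`, then by uniform convergence and continuity of `v` there is
an open neighbourhood `S` of `(x, y)` of finite measure on which the Hölder quotients of all `vₙ`
with `n` large exceed `a`. Hence `‖D^α vₙ‖_{L^{pₙ}} ≥ a · |S|^{1/pₙ}`, and `|S|^{1/pₙ} → 1`
as `pₙ → ∞`.
-/

section LiminfLpNorm

variable {ι X : Type*} {l : Filter ι} {p : ι → ℝ}

theorem ENNReal.tendsto_rpow_one_div_of_tendsto_atTop {c : ℝ≥0∞} (hc0 : c ≠ 0) (hc : c ≠ ⊤)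
    (hp : Tendsto p l atTop) : Tendsto (fun i => c ^ (1 / p i)) l (𝓝 1) := by
  lift c to NNReal using hc
  have hc0' : c ≠ 0 := by exact_mod_cast hc0
  have h : Tendsto (fun i => c ^ (1 / p i)) l (𝓝 (c ^ (0 : ℝ))) :=
    tendsto_const_nhds.nnrpow (by simp only [one_div]; exact tendsto_inv_atTop_zero.comp hp)
      (Or.inl hc0')
  simpa [← ENNReal.coe_rpow_of_ne_zero hc0'] using ENNReal.tendsto_coe.2 h

variable [MeasurableSpace X] {μ : Measure X}

theorem mul_measure_rpow_le_lintegral_rpow {S : Set X} (hS : MeasurableSet S) {F : X → ℝ≥0∞}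
    {a : ℝ≥0∞} (haF : ∀ q ∈ S, a ≤ F q) {r : ℝ} (hr : 0 < r) :
    a * μ S ^ (1 / r) ≤ (∫⁻ q, F q ^ r ∂μ) ^ (1 / r) := by
  have hint : a ^ r * μ S ≤ ∫⁻ q, F q ^ r ∂μ :=
    calc a ^ r * μ S = ∫⁻ _ in S, a ^ r ∂μ := (setLIntegral_const S _).symm
      _ ≤ ∫⁻ q in S, F q ^ r ∂μ :=
        lintegral_mono_ae <| ae_restrict_of_forall_mem hS fun q hq =>
          ENNReal.rpow_le_rpow (haF q hq) hr.le
      _ ≤ ∫⁻ q, F q ^ r ∂μ := setLIntegral_le_lintegral S _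
  calc a * μ S ^ (1 / r) = (a ^ r * μ S) ^ (1 / r) := by
        rw [ENNReal.mul_rpow_of_nonneg _ _ (by positivity), ← ENNReal.rpow_mul,
          mul_one_div_cancel hr.ne', ENNReal.rpow_one]
    _ ≤ _ := ENNReal.rpow_le_rpow hint (by positivity)

theorem le_liminf_lintegral_rpow_of_forall_mem [l.NeBot] (hp : Tendsto p l atTop)
    {S : Set X} (hS : MeasurableSet S) (hS0 : μ S ≠ 0) (hSfin : μ S ≠ ⊤)
    {F : ι → X → ℝ≥0∞} {a : ℝ≥0∞} (haF : ∀ᶠ i in l, ∀ q ∈ S, a ≤ F i q) :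
    a ≤ liminf (fun i => (∫⁻ q, F i q ^ p i ∂μ) ^ (1 / p i)) l := by
  have hlower : Tendsto (fun i => a * μ S ^ (1 / p i)) l (𝓝 a) := by
    simpa using ENNReal.Tendsto.const_mul
      (ENNReal.tendsto_rpow_one_div_of_tendsto_atTop hS0 hSfin hp) (Or.inl one_ne_zero)
  calc a = liminf (fun i => a * μ S ^ (1 / p i)) l := hlower.liminf_eq.symm
    _ ≤ _ := liminf_le_liminf <| (haF.and (hp.eventually_gt_atTop 0)).mono
        fun i ⟨hi, hpi⟩ => mul_measure_rpow_le_lintegral_rpow hS hi hpi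

variable [TopologicalSpace X] [OpensMeasurableSpace X] [μ.IsOpenPosMeasure]
  [IsLocallyFiniteMeasure μ]

theorem le_liminf_lintegral_rpow_of_tendsto [l.NeBot] (hp : Tendsto p l atTop)
    {F : ι → X → ℝ≥0∞} {z : X} {b : ℝ≥0∞}
    (hF : Tendsto (fun iq : ι × X => F iq.1 iq.2) (l ×ˢ 𝓝 z) (𝓝 b)) :
    b ≤ liminf (fun i => (∫⁻ q, F i q ^ p i ∂μ) ^ (1 / p i)) l := by
  refine le_of_forall_lt_imp_le_of_dense fun a ha => ?_
  obtain ⟨good, hgood, near, hnear, hlt⟩ := eventually_prod_iff.1 (hF.eventually_const_lt ha)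
  obtain ⟨t, ht, htfin⟩ := μ.finiteAt_nhds z
  obtain ⟨U, hUsub, hUopen, hzU⟩ := mem_nhds_iff.1 (inter_mem hnear ht)
  refine le_liminf_lintegral_rpow_of_forall_mem hp hUopen.measurableSet
    (hUopen.measure_pos μ ⟨z, hzU⟩).ne' ((measure_mono fun q hq => (hUsub hq).2).trans_lt htfin).ne
    (hgood.mono fun i hi q hq => (hlt hi (hUsub hq).1).le)

end LiminfLpNorm

theorem TendstoUniformly.tendsto_prod_nhds {ι α β : Type*} [TopologicalSpace α] [UniformSpace β]
    {F : ι → α → β} {f : α → β} {l : Filter ι} {x : α} (h : TendstoUniformly F f l)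
    (hf : ContinuousAt f x) :
    Tendsto (fun ia : ι × α => F ia.1 ia.2) (l ×ˢ 𝓝 x) (𝓝 (f x)) :=
  TendstoUniformly.tendsto_comp (F := fun ia : ι × α => F ia.1)
    (fun u hu => tendsto_fst.eventually (h u hu)) hf tendsto_snd

section HolderQuotient

variable {E : Type*} [NormedAddCommGroup E]

def holderQuotient (α : ℝ) (v : E → ℝ) (q : E × E) : ℝ :=
  |v q.1 - v q.2| / ‖q.1 - q.2‖ ^ α

theorem tendsto_holderQuotient {ι : Type*} {l : Filter ι} {vn : ι → E → ℝ} {v : E → ℝ}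
    (hunif : TendstoUniformly vn v l) (hv : Continuous v) (α : ℝ) {x y : E} (hxy : x ≠ y) :
    Tendsto (fun iq : ι × (E × E) => holderQuotient α (vn iq.1) iq.2) (l ×ˢ 𝓝 (x, y))
      (𝓝 (holderQuotient α v (x, y))) := by
  have hval : ∀ g : E × E → E, Continuous g →
      Tendsto (fun iq : ι × (E × E) => vn iq.1 (g iq.2)) (l ×ˢ 𝓝 (x, y)) (𝓝 (v (g (x, y)))) :=
    fun g hg => (hunif.tendsto_prod_nhds hv.continuousAt).comp
      (tendsto_id.prodMap (hg.tendsto (x, y)))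
  have hdist : ‖x - y‖ ≠ 0 := norm_ne_zero_iff.2 (sub_ne_zero.2 hxy)
  have hden : Tendsto (fun iq : ι × (E × E) => ‖iq.2.1 - iq.2.2‖ ^ α) (l ×ˢ 𝓝 (x, y))
      (𝓝 (‖x - y‖ ^ α)) :=
    ((continuous_fst.sub continuous_snd).norm.tendsto (x, y)).comp tendsto_snd |>.rpow_const
      (Or.inl hdist)
  exact (((hval _ continuous_fst).sub (hval _ continuous_snd)).abs).div hden
    (Real.rpow_pos_of_pos (lt_of_le_of_ne (norm_nonneg _) hdist.symm) α).ne'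

theorem holderLp_eq_lintegral_rpow {N : ℕ} (α : ℝ) {p : ℝ} (hp : 0 ≤ p) (v : Euc N → ℝ) :
    holderLp N α p v = (∫⁻ q, ENNReal.ofReal (holderQuotient α v q) ^ p) ^ (1 / p) := by
  unfold holderLp holderQuotient
  congr 1
  refine lintegral_congr fun q => ?_
  rw [ENNReal.ofReal_rpow_of_nonneg (by positivity) hp,
    Real.div_rpow (abs_nonneg _) (by positivity), Real.rpow_mul (norm_nonneg _)]

end HolderQuotient

theorem holder_liminf_general (N : ℕ) (α : ℝ)
    (pn : ℕ → ℝ) (hpinf : Tendsto pn atTop atTop)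
    (vn : ℕ → Euc N → ℝ) (v : Euc N → ℝ)
    (hv : Continuous v)
    (hunif : TendstoUniformly vn v atTop) :
    holderSemi N α v ≤ Filter.liminf (fun n => holderLp N α (pn n) (vn n)) atTop := by
  refine iSup₂_le fun x y => iSup_le fun hxy => ?_
  rw [liminf_congr ((hpinf.eventually_ge_atTop 0).mono fun n hn =>
    holderLp_eq_lintegral_rpow α hn (vn n))]
  exact le_liminf_lintegral_rpow_of_tendsto hpinf
    ((ENNReal.continuous_ofReal.tendsto _).comp
      (tendsto_holderQuotient hunif hv α hxy))

/-- Liminf inequality for Hölder quotients: if `pₙ → ∞` and `vₙ → v`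
uniformly (all continuous), then `‖D^α v‖_{L^∞} ≤ liminf ‖D^α vₙ‖_{L^{pₙ}}`. -/
theorem holder_liminf (N : ℕ) (α : ℝ) (hα : 0 < α) (hα1 : α < 1)
    (pn : ℕ → ℝ) (hpn : ∀ n, 1 ≤ pn n) (hpinf : Tendsto pn atTop atTop)
    (vn : ℕ → Euc N → ℝ) (v : Euc N → ℝ)
    (hvn : ∀ n, Continuous (vn n)) (hv : Continuous v)
    (hunif : TendstoUniformly vn v atTop) :
    holderSemi N α v ≤ Filter.liminf (fun n => holderLp N α (pn n) (vn n)) atTop :=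
  holder_liminf_general N α pn hpinf vn v hv hunif
end
end

section
/- (Γ-liminf inequality for homogenization of fractional energies) Let Ω ⊆ ℝ^N be a bounded open set, 0 < s < 1, 1 < p < ∞, and 0 < α ≤ β < ∞. Let a_n, a_0 ∈ A_{α,β} with a_n → a_0 weakly* in L^∞(ℝ^N×ℝ^N), i.e. ∬ a_n g dx dy → ∬ a_0 g dx dy for every g ∈ L^1(ℝ^N×ℝ^N). Let v_n, v ∈ L^p(Ω) (extended by zero to ℝ^N) with v_n → v in L^p(Ω) and sup_n Φ_{a_n}(v_n) < ∞, where Φ_a(u) = ∬_{ℝ^N×ℝ^N} a(x,y) |u(x)−u(y)|^p / |x−y|^{N+sp} dx dy. Then v ∈ W^{s,p}_0(Ω) and Φ_{a_0}(v) ≤ liminf_{n→∞} Φ_{a_n}(v_n). -/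
open MeasureTheory ENNReal Filter Topology

noncomputable section

/-- The class `A_{α,β}` of symmetric kernels `a ∈ L^∞(ℝ^N×ℝ^N)` with `α ≤ a ≤ β` a.e. -/
def memA (N : ℕ) (α β : ℝ) (a : Euc N × Euc N → ℝ) : Prop :=
  Measurable a ∧
    (∀ᵐ q ∂(volume : Measure (Euc N × Euc N)), a (q.2, q.1) = a q) ∧
    ∀ᵐ q ∂(volume : Measure (Euc N × Euc N)), α ≤ a q ∧ a q ≤ β

/-- The energy `Φ_a(u) = ∬ a(x,y)|u(x)-u(y)|^p / |x-y|^{N+sp} dx dy`. -/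
def PhiA (N : ℕ) (s p : ℝ) (a : Euc N × Euc N → ℝ) (u : Euc N → ℝ) : ℝ≥0∞ :=
  ∫⁻ q : Euc N × Euc N,
    ENNReal.ofReal (a q * |u q.1 - u q.2| ^ p / ‖q.1 - q.2‖ ^ ((N : ℝ) + s * p)) ∂volume

/-!
Cut the double integral down to the sets `T_m = {|x - y| ≥ 1/(m+1), |x|, |y| ≤ m}`, which exhaust
the off-diagonal. On `T_m` the weight `a(x,y)/|x-y|^{N+sp}` is at most a constant times `β`, so in
`L^p(T_m)` of that weight the difference `(x,y) ↦ u(x) - u(y)` is controlled by `‖u‖_p`, uniformly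
in `a`. Weak* convergence of `aₙ` moves the truncated energy of the fixed function `v` from `aₙ` to
`a₀`, and the convexity estimate `‖f‖^p ≤ ‖g‖^p + p ‖f‖^{p-1} ‖f - g‖` in `L^p` of the weight
`aₙ/|x-y|^{N+sp}` shows that replacing `v` by `vₙ` costs an error that vanishes as `vₙ → v`.
Letting `m → ∞` gives the liminf inequality, and `a₀ ≥ α > 0` turns the finiteness of `Φ_{a₀}(v)`
into that of the Gagliardo seminorm.
-/

theorem rpow_sub_rpow_le_mul_rpow_mul_sub {A B p : ℝ} (hA : 0 ≤ A) (hB : 0 ≤ B) (hp : 1 < p) :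
    A ^ p - B ^ p ≤ p * A ^ (p - 1) * (A - B) := by
  rcases hA.eq_or_lt with rfl | hA
  · rw [Real.zero_rpow (by linarith), Real.zero_rpow (by linarith)]
    linarith [Real.rpow_nonneg hB p]
  have bernoulli := one_add_mul_self_le_rpow_one_add (s := B / A - 1)
    (by linarith [div_nonneg hB hA.le]) hp.le
  rw [add_sub_cancel, Real.div_rpow hB hA.le, le_div_iff₀ (Real.rpow_pos_of_pos hA p)]
    at bernoulli
  have hApow : A ^ p = A ^ (p - 1) * A := by
    rw [Real.rpow_sub_one hA.ne', div_mul_cancel₀ _ hA.ne']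
  have : (1 + p * (B / A - 1)) * A ^ p = A ^ p + p * A ^ (p - 1) * (B - A) := by
    rw [hApow]
    field_simp
  linarith

theorem enorm_rpow_le_enorm_rpow_add {E : Type*} [NormedAddCommGroup E] {p : ℝ} (hp : 1 < p)
    (x y : E) :
    ‖x‖ₑ ^ p ≤ ‖y‖ₑ ^ p + ENNReal.ofReal p * (‖x‖ₑ ^ (p - 1) * ‖x - y‖ₑ) := by
  have hreal : ‖x‖ ^ p ≤ ‖y‖ ^ p + p * (‖x‖ ^ (p - 1) * ‖x - y‖) := by
    have h := rpow_sub_rpow_le_mul_rpow_mul_sub (norm_nonneg x) (norm_nonneg y) hp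
    have h' : p * ‖x‖ ^ (p - 1) * (‖x‖ - ‖y‖) ≤ p * (‖x‖ ^ (p - 1) * ‖x - y‖) := by
      rw [mul_assoc]
      gcongr
      exact norm_sub_norm_le x y
    linarith
  simp only [← ofReal_norm]
  rw [ofReal_rpow_of_nonneg (norm_nonneg _) (by linarith),
    ofReal_rpow_of_nonneg (norm_nonneg _) (by linarith),
    ofReal_rpow_of_nonneg (norm_nonneg _) (by linarith),
    ← ofReal_mul (by positivity), ← ofReal_mul (by linarith),
    ← ofReal_add (by positivity) (by positivity)]
  exact ofReal_le_ofReal hreal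

section Lp

variable {α E : Type*} [MeasurableSpace α] [NormedAddCommGroup E] {p : ℝ}

theorem eLpNorm_ofReal_rpow_eq_lintegral {μ : Measure α} (hp : 0 < p) (f : α → E) :
    eLpNorm f (ENNReal.ofReal p) μ ^ p = ∫⁻ x, ‖f x‖ₑ ^ p ∂μ := by
  have := eLpNorm_nnreal_pow_eq_lintegral (f := f) (μ := μ) (p := p.toNNReal)
    (by simpa using hp)
  rwa [Real.coe_toNNReal _ hp.le] at this

theorem eLpNorm_rpow_le_add {μ : Measure α} (hp : 1 < p) {f g : α → E}
    (hf : AEStronglyMeasurable f μ) (hg : AEStronglyMeasurable g μ) :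
    eLpNorm f (ENNReal.ofReal p) μ ^ p ≤ eLpNorm g (ENNReal.ofReal p) μ ^ p +
      ENNReal.ofReal p * (eLpNorm f (ENNReal.ofReal p) μ ^ (p - 1) *
        eLpNorm (f - g) (ENNReal.ofReal p) μ) := by
  have hp0 : 0 < p := by linarith
  have hpq := Real.HolderConjugate.conjExponent hp
  have holder := ENNReal.lintegral_mul_le_Lp_mul_Lq μ hpq.symm
    (f := fun x => ‖f x‖ₑ ^ (p - 1)) (g := fun x => ‖(f - g) x‖ₑ)
    (hf.enorm.pow_const _) (hf.sub hg).enorm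
  simp only [← ENNReal.rpow_mul, hpq.sub_one_mul_conj] at holder
  rw [eLpNorm_ofReal_rpow_eq_lintegral hp0, eLpNorm_ofReal_rpow_eq_lintegral hp0]
  calc ∫⁻ x, ‖f x‖ₑ ^ p ∂μ
      ≤ ∫⁻ x, ‖g x‖ₑ ^ p + ENNReal.ofReal p * (‖f x‖ₑ ^ (p - 1) * ‖(f - g) x‖ₑ) ∂μ :=
        lintegral_mono fun x => enorm_rpow_le_enorm_rpow_add hp (f x) (g x)
    _ = ∫⁻ x, ‖g x‖ₑ ^ p ∂μ
          + ENNReal.ofReal p * ∫⁻ x, ‖f x‖ₑ ^ (p - 1) * ‖(f - g) x‖ₑ ∂μ := by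
        rw [lintegral_add_left' (hg.enorm.pow_const _), lintegral_const_mul' _ _ ofReal_ne_top]
    _ ≤ _ := by
        gcongr
        refine holder.trans_eq ?_
        rw [← eLpNorm_ofReal_rpow_eq_lintegral hp0, ← ENNReal.rpow_mul,
          ← eLpNorm_ofReal_rpow_eq_lintegral hp0, ← ENNReal.rpow_mul,
          mul_one_div_cancel hp0.ne', ENNReal.rpow_one, mul_one_div, hpq.div_conj_eq_sub_one]

theorem le_liminf_eLpNorm_rpow_of_tendsto {μ : ℕ → Measure α} (hp : 1 < p) {f : α → E}
    {g : ℕ → α → E} (hf : ∀ n, AEStronglyMeasurable f (μ n))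
    (hg : ∀ n, AEStronglyMeasurable (g n) (μ n)) {C : ℝ≥0∞} (hC : C ≠ ∞)
    (hbdd : ∀ n, eLpNorm f (ENNReal.ofReal p) (μ n) ≤ C)
    (hconv : Tendsto (fun n => eLpNorm (f - g n) (ENNReal.ofReal p) (μ n)) atTop (𝓝 0))
    {L : ℝ≥0∞}
    (hlim : Tendsto (fun n => eLpNorm f (ENNReal.ofReal p) (μ n) ^ p) atTop (𝓝 L)) :
    L ≤ liminf (fun n => eLpNorm (g n) (ENNReal.ofReal p) (μ n) ^ p) atTop := by
  have hCp : ENNReal.ofReal p * C ^ (p - 1) ≠ ∞ :=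
    mul_ne_top ofReal_ne_top (rpow_ne_top_of_nonneg (by linarith) hC)
  have herr : Tendsto (fun n => ENNReal.ofReal p *
      (eLpNorm f (ENNReal.ofReal p) (μ n) ^ (p - 1) *
        eLpNorm (f - g n) (ENNReal.ofReal p) (μ n))) atTop (𝓝 0) := by
    have hlim0 := ENNReal.Tendsto.const_mul hconv (Or.inr hCp)
    rw [mul_zero] at hlim0
    refine tendsto_of_tendsto_of_tendsto_of_le_of_le tendsto_const_nhds hlim0 (fun _ => zero_le)
      fun n => ?_
    rw [mul_assoc (ENNReal.ofReal p) (C ^ (p - 1))]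
    gcongr
    exact hbdd n
  calc L = liminf (fun n => eLpNorm f (ENNReal.ofReal p) (μ n) ^ p) atTop :=
        hlim.liminf_eq.symm
    _ ≤ liminf (fun n => eLpNorm (g n) (ENNReal.ofReal p) (μ n) ^ p + ENNReal.ofReal p *
          (eLpNorm f (ENNReal.ofReal p) (μ n) ^ (p - 1) *
            eLpNorm (f - g n) (ENNReal.ofReal p) (μ n))) atTop :=
        liminf_le_liminf (.of_forall fun n => eLpNorm_rpow_le_add hp (hf n) (hg n))
    _ = _ := ENNReal.liminf_add_of_right_tendsto_zero herr _

end Lp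

def WeakStarTendsto {α : Type*} [MeasurableSpace α] (μ : Measure α) (a : ℕ → α → ℝ)
    (a₀ : α → ℝ) : Prop :=
  ∀ g : α → ℝ, Integrable g μ →
    Tendsto (fun n => ∫ x, a n x * g x ∂μ) atTop (𝓝 (∫ x, a₀ x * g x ∂μ))

namespace WeakStarTendsto

variable {α : Type*} [MeasurableSpace α] {μ : Measure α} {a : ℕ → α → ℝ} {a₀ : α → ℝ}

theorem restrict (h : WeakStarTendsto μ a a₀) {s : Set α} (hs : MeasurableSet s) :
    WeakStarTendsto (μ.restrict s) a a₀ := by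
  intro g hg
  simpa only [← Set.indicator_mul_right, integral_indicator hs] using
    h _ (IntegrableOn.integrable_indicator hg hs)

theorem tendsto_lintegral_ofReal_mul (h : WeakStarTendsto μ a a₀) {β : ℝ}
    (ha : ∀ n, AEStronglyMeasurable (a n) μ) (ha_bdd : ∀ n, ∀ᵐ x ∂μ, 0 ≤ a n x ∧ a n x ≤ β)
    (ha₀ : AEStronglyMeasurable a₀ μ) (ha₀_bdd : ∀ᵐ x ∂μ, 0 ≤ a₀ x ∧ a₀ x ≤ β)
    {φ : α → ℝ} (hφ : Integrable φ μ) (hφ₀ : 0 ≤ᵐ[μ] φ) :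
    Tendsto (fun n => ∫⁻ x, ENNReal.ofReal (a n x * φ x) ∂μ) atTop
      (𝓝 (∫⁻ x, ENNReal.ofReal (a₀ x * φ x) ∂μ)) := by
  have hofReal : ∀ b : α → ℝ, AEStronglyMeasurable b μ → (∀ᵐ x ∂μ, 0 ≤ b x ∧ b x ≤ β) →
      ∫⁻ x, ENNReal.ofReal (b x * φ x) ∂μ = ENNReal.ofReal (∫ x, b x * φ x ∂μ) := by
    intro b hb hb_bdd
    refine (ofReal_integral_eq_lintegral_ofReal (hφ.bdd_mul (c := β) hb ?_) ?_).symm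
    · filter_upwards [hb_bdd] with x hx
      rw [Real.norm_eq_abs, abs_of_nonneg hx.1]
      exact hx.2
    · filter_upwards [hb_bdd, hφ₀] with x hx hφx
      exact mul_nonneg hx.1 hφx
  rw [hofReal a₀ ha₀ ha₀_bdd]
  exact ((ENNReal.continuous_ofReal.tendsto _).comp (h φ hφ)).congr
    fun n => (hofReal (a n) (ha n) (ha_bdd n)).symm

end WeakStarTendsto

def pairDiff {X E : Type*} [Sub E] (u : X → E) : X × X → E := fun q => u q.1 - u q.2

theorem pairDiff_sub {X E : Type*} [AddCommGroup E] (u w : X → E) :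
    pairDiff (u - w) = pairDiff u - pairDiff w := by
  ext q
  simp only [pairDiff, Pi.sub_apply]
  abel

section Product

variable {X Y E : Type*} [MeasurableSpace X] [MeasurableSpace Y] [NormedAddCommGroup E]

theorem eLpNorm_comp_fst_prod (μ : Measure X) (ν : Measure Y) [SFinite ν] {p : ℝ≥0∞}
    (hp : p ≠ ∞) {u : X → E} (hu : AEStronglyMeasurable u μ) :
    eLpNorm (fun q : X × Y => u q.1) p (μ.prod ν) =
      ν Set.univ ^ (1 / p.toReal) * eLpNorm u p μ := by
  rw [← Function.comp_def, ← eLpNorm_map_measure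
      (by rw [Measure.map_fst_prod]; exact hu.smul_measure _) measurable_fst.aemeasurable,
    Measure.map_fst_prod, eLpNorm_smul_measure_of_ne_top hp, smul_eq_mul, one_div, one_div,
    toReal_inv]

theorem eLpNorm_comp_snd_prod (μ : Measure X) (ν : Measure Y) [SFinite ν] {p : ℝ≥0∞}
    (hp : p ≠ ∞) {u : Y → E} (hu : AEStronglyMeasurable u ν) :
    eLpNorm (fun q : X × Y => u q.2) p (μ.prod ν) =
      μ Set.univ ^ (1 / p.toReal) * eLpNorm u p ν := by
  rw [← Function.comp_def, ← eLpNorm_map_measure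
      (by rw [Measure.map_snd_prod]; exact hu.smul_measure _) measurable_snd.aemeasurable,
    Measure.map_snd_prod, eLpNorm_smul_measure_of_ne_top hp, smul_eq_mul, one_div, one_div,
    toReal_inv]

theorem aestronglyMeasurable_pairDiff {μ : Measure X} [SFinite μ] {u : X → E}
    (hu : AEStronglyMeasurable u μ) : AEStronglyMeasurable (pairDiff u) (μ.prod μ) :=
  hu.comp_fst.sub hu.comp_snd

theorem eLpNorm_pairDiff_prod_restrict_le (μ : Measure X) [SFinite μ] {p : ℝ≥0∞} (hp : 1 ≤ p)
    (hp_top : p ≠ ∞) {u : X → E} (hu : AEStronglyMeasurable u μ) (B : Set X) :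
    eLpNorm (pairDiff u) p ((μ.prod μ).restrict (B ×ˢ B)) ≤
      2 * μ B ^ (1 / p.toReal) * eLpNorm u p μ := by
  rw [← Measure.prod_restrict]
  have hu' : AEStronglyMeasurable u (μ.restrict B) := hu.restrict
  calc eLpNorm (pairDiff u) p ((μ.restrict B).prod (μ.restrict B))
      ≤ eLpNorm (fun q : X × X => u q.1) p ((μ.restrict B).prod (μ.restrict B)) +
          eLpNorm (fun q : X × X => u q.2) p ((μ.restrict B).prod (μ.restrict B)) :=
        eLpNorm_sub_le hu'.comp_fst hu'.comp_snd hp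
    _ = 2 * μ B ^ (1 / p.toReal) * eLpNorm u p (μ.restrict B) := by
        rw [eLpNorm_comp_fst_prod _ _ hp_top hu', eLpNorm_comp_snd_prod _ _ hp_top hu',
          Measure.restrict_apply_univ, ← two_mul, mul_assoc]
    _ ≤ 2 * μ B ^ (1 / p.toReal) * eLpNorm u p μ := by
        gcongr
        exact Measure.restrict_le_self

end Product

def kernelMeasure (N : ℕ) (s p : ℝ) (a : Euc N × Euc N → ℝ) : Measure (Euc N × Euc N) :=
  volume.withDensity fun q => ENNReal.ofReal (a q / ‖q.1 - q.2‖ ^ ((N : ℝ) + s * p))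

def truncatedOffDiagonal (N m : ℕ) : Set (Euc N × Euc N) :=
  {q | ((m : ℝ) + 1)⁻¹ ≤ ‖q.1 - q.2‖} ∩ Metric.closedBall 0 m ×ˢ Metric.closedBall 0 m

section Kernel

variable {N : ℕ} {s p : ℝ}

theorem measurableSet_truncatedOffDiagonal (m : ℕ) :
    MeasurableSet (truncatedOffDiagonal N m) :=
  (measurableSet_le measurable_const (by fun_prop)).inter
    (measurableSet_closedBall.prod measurableSet_closedBall)

theorem monotone_truncatedOffDiagonal : Monotone (truncatedOffDiagonal N) := by
  intro m m' hm q ⟨hq, hq₁, hq₂⟩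
  have hm' : (m : ℝ) ≤ m' := by exact_mod_cast hm
  refine ⟨?_, Metric.closedBall_subset_closedBall hm' hq₁,
    Metric.closedBall_subset_closedBall hm' hq₂⟩
  change ((m : ℝ) + 1)⁻¹ ≤ ‖q.1 - q.2‖ at hq
  change ((m' : ℝ) + 1)⁻¹ ≤ ‖q.1 - q.2‖
  exact le_trans (by gcongr) hq

theorem iUnion_truncatedOffDiagonal :
    ⋃ m, truncatedOffDiagonal N m = {q | q.1 ≠ q.2} := by
  ext q
  simp only [Set.mem_iUnion, Set.mem_ofPred_eq]
  constructor
  · rintro ⟨m, hq, -⟩ h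
    rw [Set.mem_ofPred_eq, h, sub_self, norm_zero] at hq
    exact (inv_pos.2 (by positivity : (0 : ℝ) < m + 1)).not_ge hq
  · intro hq
    have hpos : 0 < ‖q.1 - q.2‖ := norm_pos_iff.2 (sub_ne_zero.2 hq)
    obtain ⟨m, hm⟩ := exists_nat_ge (max (max ‖q.1‖ ‖q.2‖) ‖q.1 - q.2‖⁻¹)
    simp only [max_le_iff] at hm
    refine ⟨m, ?_, mem_closedBall_zero_iff.2 hm.1.1, mem_closedBall_zero_iff.2 hm.1.2⟩
    exact inv_le_of_inv_le₀ hpos (by linarith)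

theorem eLpNorm_pairDiff_kernelMeasure_restrict_rpow (hp : 0 < p) {a : Euc N × Euc N → ℝ}
    (ha : Measurable a) (u : Euc N → ℝ) {T : Set (Euc N × Euc N)} (hT : MeasurableSet T) :
    eLpNorm (pairDiff u) (ENNReal.ofReal p) ((kernelMeasure N s p a).restrict T) ^ p =
      ∫⁻ q in T,
        ENNReal.ofReal (a q * |u q.1 - u q.2| ^ p / ‖q.1 - q.2‖ ^ ((N : ℝ) + s * p)) := by
  rw [eLpNorm_ofReal_rpow_eq_lintegral hp, kernelMeasure,
    setLIntegral_withDensity_eq_setLIntegral_mul_non_measurable _ (by fun_prop) _ hT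
      (.of_forall fun _ => ofReal_lt_top)]
  refine lintegral_congr fun q => ?_
  rw [Pi.mul_apply, pairDiff, Real.enorm_eq_ofReal_abs,
    ofReal_rpow_of_nonneg (abs_nonneg _) hp.le, ← ofReal_mul' (by positivity),
    div_mul_eq_mul_div]

theorem PhiA_eq_eLpNorm_pairDiff_rpow (hp : 0 < p) {a : Euc N × Euc N → ℝ} (ha : Measurable a)
    (u : Euc N → ℝ) :
    PhiA N s p a u = eLpNorm (pairDiff u) (ENNReal.ofReal p) (kernelMeasure N s p a) ^ p := by
  simpa [PhiA] using
    (eLpNorm_pairDiff_kernelMeasure_restrict_rpow hp ha u MeasurableSet.univ).symm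

theorem PhiA_eq_iSup_truncatedOffDiagonal (hp : 0 < p) {a : Euc N × Euc N → ℝ}
    (ha : Measurable a) (u : Euc N → ℝ) :
    PhiA N s p a u = ⨆ m, eLpNorm (pairDiff u) (ENNReal.ofReal p)
      ((kernelMeasure N s p a).restrict (truncatedOffDiagonal N m)) ^ p := by
  simp only [PhiA_eq_eLpNorm_pairDiff_rpow hp ha, eLpNorm_ofReal_rpow_eq_lintegral hp]
  rw [← setLIntegral_iUnion_of_directed _ monotone_truncatedOffDiagonal.directed_le,
    iUnion_truncatedOffDiagonal, setLIntegral_eq_of_support_subset]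
  -- `u x - u y` vanishes on the diagonal, the only part of the space these sets miss
  intro q hq
  by_contra hdiag
  simp only [Set.mem_ofPred_eq, not_not] at hdiag
  simp [pairDiff, hdiag, hp] at hq

theorem kernelMeasure_restrict_truncatedOffDiagonal_le (hs : 0 ≤ s) (hp : 0 ≤ p) {β : ℝ}
    (hβ : 0 ≤ β) {a : Euc N × Euc N → ℝ} (ha : ∀ᵐ q, a q ≤ β) (m : ℕ) :
    (kernelMeasure N s p a).restrict (truncatedOffDiagonal N m) ≤
      ENNReal.ofReal (β * ((m : ℝ) + 1) ^ ((N : ℝ) + s * p)) •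
        volume.restrict (Metric.closedBall 0 m ×ˢ Metric.closedBall 0 m) := by
  rw [kernelMeasure, restrict_withDensity (measurableSet_truncatedOffDiagonal m)]
  calc _ ≤ (volume.restrict (truncatedOffDiagonal N m)).withDensity
        fun _ => ENNReal.ofReal (β * ((m : ℝ) + 1) ^ ((N : ℝ) + s * p)) := by
        refine withDensity_mono ?_
        filter_upwards [ae_restrict_of_ae ha,
          ae_restrict_mem (measurableSet_truncatedOffDiagonal m)] with q hq hqT
        have hr : (‖q.1 - q.2‖ ^ ((N : ℝ) + s * p))⁻¹ ≤
            ((m : ℝ) + 1) ^ ((N : ℝ) + s * p) := by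
          rw [← Real.inv_rpow (norm_nonneg _)]
          exact Real.rpow_le_rpow (by positivity) (inv_le_of_inv_le₀ (by positivity) hqT.1)
            (by positivity)
        refine ofReal_le_ofReal ?_
        calc a q / ‖q.1 - q.2‖ ^ ((N : ℝ) + s * p)
            ≤ β * (‖q.1 - q.2‖ ^ ((N : ℝ) + s * p))⁻¹ := by
              rw [← div_eq_mul_inv]
              gcongr
          _ ≤ β * ((m : ℝ) + 1) ^ ((N : ℝ) + s * p) := by gcongr
    _ = _ := withDensity_const _
    _ ≤ _ := by
        gcongr
        exact Set.inter_subset_right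

theorem exists_eLpNorm_pairDiff_kernelMeasure_restrict_le (hs : 0 ≤ s) (hp : 1 ≤ p) {β : ℝ}
    (hβ : 0 ≤ β) (m : ℕ) :
    ∃ K : ℝ≥0∞, K ≠ ∞ ∧ ∀ a : Euc N × Euc N → ℝ, (∀ᵐ q, a q ≤ β) →
      ∀ u : Euc N → ℝ, AEStronglyMeasurable u volume →
        eLpNorm (pairDiff u) (ENNReal.ofReal p)
            ((kernelMeasure N s p a).restrict (truncatedOffDiagonal N m)) ≤
          K * eLpNorm u (ENNReal.ofReal p) volume := by
  set c := ENNReal.ofReal (β * ((m : ℝ) + 1) ^ ((N : ℝ) + s * p))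
  set B := Metric.closedBall (0 : Euc N) m
  have hp' : (ENNReal.ofReal p).toReal = p := toReal_ofReal (by linarith)
  refine ⟨c ^ (1 / p) * (2 * volume B ^ (1 / p)), ?_, fun a ha u hu => ?_⟩
  · have : volume B ≠ ∞ := measure_closedBall_lt_top.ne
    finiteness
  calc _ ≤ eLpNorm (pairDiff u) (ENNReal.ofReal p) (c • volume.restrict (B ×ˢ B)) :=
        eLpNorm_mono_measure _
          (kernelMeasure_restrict_truncatedOffDiagonal_le hs (by linarith) hβ ha m)
    _ = c ^ (1 / p) * eLpNorm (pairDiff u) (ENNReal.ofReal p) (volume.restrict (B ×ˢ B)) := by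
        rw [eLpNorm_smul_measure_of_ne_top ofReal_ne_top, one_div, toReal_inv, hp', one_div,
          smul_eq_mul]
    _ ≤ c ^ (1 / p) * (2 * volume B ^ (1 / p) * eLpNorm u (ENNReal.ofReal p) volume) := by
        rw [Measure.volume_eq_prod]
        gcongr
        simpa only [hp'] using
          eLpNorm_pairDiff_prod_restrict_le volume (one_le_ofReal.2 hp) ofReal_ne_top hu B
    _ = _ := by ring

theorem integrableOn_truncatedOffDiagonal (hs : 0 ≤ s) (hp : 1 < p) {v : Euc N → ℝ}
    (hv : MemLp v (ENNReal.ofReal p) volume) (m : ℕ) :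
    IntegrableOn (fun q => |v q.1 - v q.2| ^ p / ‖q.1 - q.2‖ ^ ((N : ℝ) + s * p))
      (truncatedOffDiagonal N m) := by
  have hp0 : 0 < p := by linarith
  obtain ⟨K, hK, hbound⟩ :=
    exists_eLpNorm_pairDiff_kernelMeasure_restrict_le (N := N) hs hp.le zero_le_one m
  have hD : AEMeasurable (fun q : Euc N × Euc N => v q.1 - v q.2) volume := by
    rw [Measure.volume_eq_prod]
    exact (aestronglyMeasurable_pairDiff hv.1).aemeasurable
  have hφ : AEMeasurable (fun q : Euc N × Euc N =>
      |v q.1 - v q.2| ^ p / ‖q.1 - q.2‖ ^ ((N : ℝ) + s * p)) volume := by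
    fun_prop
  refine ⟨hφ.aestronglyMeasurable.restrict,
    (hasFiniteIntegral_iff_ofReal (.of_forall fun q => by positivity)).2 ?_⟩
  have hEnergy := eLpNorm_pairDiff_kernelMeasure_restrict_rpow (s := s) hp0
    (measurable_const (a := (1 : ℝ))) v (measurableSet_truncatedOffDiagonal m)
  simp only [one_mul] at hEnergy
  rw [← hEnergy]
  exact rpow_lt_top_of_nonneg hp0.le (ne_top_of_le_ne_top (mul_ne_top hK hv.eLpNorm_ne_top)
    (hbound _ (.of_forall fun _ => le_rfl) v hv.1))

theorem eLpNorm_pairDiff_truncatedOffDiagonal_rpow_le_liminf (hs : 0 ≤ s) (hp : 1 < p)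
    {β : ℝ} (hβ : 0 ≤ β) {a : ℕ → Euc N × Euc N → ℝ} {a₀ : Euc N × Euc N → ℝ}
    (hweak : WeakStarTendsto volume a a₀) (ha : ∀ n, Measurable (a n))
    (ha_bdd : ∀ n, ∀ᵐ q, 0 ≤ a n q ∧ a n q ≤ β) (ha₀ : Measurable a₀)
    (ha₀_bdd : ∀ᵐ q, 0 ≤ a₀ q ∧ a₀ q ≤ β) {u : ℕ → Euc N → ℝ} {v : Euc N → ℝ}
    (hu : ∀ n, AEStronglyMeasurable (u n) volume) (hv : MemLp v (ENNReal.ofReal p) volume)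
    (hconv : Tendsto (fun n => eLpNorm (u n - v) (ENNReal.ofReal p) volume) atTop (𝓝 0))
    (m : ℕ) :
    eLpNorm (pairDiff v) (ENNReal.ofReal p)
        ((kernelMeasure N s p a₀).restrict (truncatedOffDiagonal N m)) ^ p ≤
      liminf (fun n => PhiA N s p (a n) (u n)) atTop := by
  have hp0 : 0 < p := by linarith
  set T := truncatedOffDiagonal N m
  have hT : MeasurableSet T := measurableSet_truncatedOffDiagonal m
  obtain ⟨K, hK, hbound⟩ :=
    exists_eLpNorm_pairDiff_kernelMeasure_restrict_le (N := N) hs hp.le hβ m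
  have hmeas : ∀ b (w : Euc N → ℝ), AEStronglyMeasurable w volume →
      AEStronglyMeasurable (pairDiff w) ((kernelMeasure N s p b).restrict T) := fun b w hw =>
    (aestronglyMeasurable_pairDiff hw).mono_ac <|
      (Measure.absolutelyContinuous_of_le Measure.restrict_le_self).trans
        (withDensity_absolutelyContinuous _ _)
  have hlim : Tendsto (fun n => eLpNorm (pairDiff v) (ENNReal.ofReal p)
      ((kernelMeasure N s p (a n)).restrict T) ^ p) atTop
      (𝓝 (eLpNorm (pairDiff v) (ENNReal.ofReal p) ((kernelMeasure N s p a₀).restrict T) ^ p)) := by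
    simp only [eLpNorm_pairDiff_kernelMeasure_restrict_rpow hp0 (ha _) _ hT,
      eLpNorm_pairDiff_kernelMeasure_restrict_rpow hp0 ha₀ _ hT, mul_div_assoc]
    exact (hweak.restrict hT).tendsto_lintegral_ofReal_mul
      (fun n => (ha n).aestronglyMeasurable) (fun n => ae_restrict_of_ae (ha_bdd n))
      ha₀.aestronglyMeasurable (ae_restrict_of_ae ha₀_bdd)
      (integrableOn_truncatedOffDiagonal hs hp hv m) (.of_forall fun q => by positivity)
  have hconv' : Tendsto (fun n => eLpNorm (pairDiff v - pairDiff (u n)) (ENNReal.ofReal p)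
      ((kernelMeasure N s p (a n)).restrict T)) atTop (𝓝 0) := by
    have hK0 := ENNReal.Tendsto.const_mul hconv (Or.inr hK)
    rw [mul_zero] at hK0
    refine tendsto_of_tendsto_of_tendsto_of_le_of_le tendsto_const_nhds hK0 (fun _ => zero_le)
      fun n => ?_
    rw [← pairDiff_sub, eLpNorm_sub_comm (u n)]
    exact hbound _ ((ha_bdd n).mono fun _ h => h.2) _ (hv.1.sub (hu n))
  refine (le_liminf_eLpNorm_rpow_of_tendsto hp (fun _ => hmeas _ v hv.1)
    (fun n => hmeas _ _ (hu n)) (mul_ne_top hK hv.eLpNorm_ne_top)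
    (fun n => hbound _ ((ha_bdd n).mono fun _ h => h.2) v hv.1) hconv' hlim).trans ?_
  refine liminf_le_liminf (.of_forall fun n => ?_)
  rw [PhiA_eq_eLpNorm_pairDiff_rpow hp0 (ha n)]
  gcongr
  exact Measure.restrict_le_self

theorem ofReal_mul_gagIntegral_le_PhiA {α : ℝ} (hα : 0 ≤ α) {a : Euc N × Euc N → ℝ}
    (ha : ∀ᵐ q, α ≤ a q) (u : Euc N → ℝ) :
    ENNReal.ofReal α * gagIntegral N s p u ≤ PhiA N s p a u := by
  rw [gagIntegral, ← lintegral_const_mul' _ _ ofReal_ne_top]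
  refine lintegral_mono_ae (ha.mono fun q hq => ?_)
  rw [← ofReal_mul hα, ← mul_div_assoc]
  gcongr

end Kernel

theorem homogenization_liminf_general (N : ℕ) (Ω : Set (Euc N)) (s p : ℝ) (hs : 0 < s) (hp : 1 < p)
    (α β : ℝ) (hα : 0 < α) (hαβ : α ≤ β)
    (an : ℕ → Euc N × Euc N → ℝ) (a0 : Euc N × Euc N → ℝ)
    (han : ∀ n, memA N α β (an n)) (ha0 : memA N α β a0)
    -- weak* convergence in L^∞(ℝ^N×ℝ^N)
    (hweak : ∀ g : Euc N × Euc N → ℝ, Integrable g volume →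
      Tendsto (fun n => ∫ q, an n q * g q) atTop (𝓝 (∫ q, a0 q * g q)))
    (vn : ℕ → Euc N → ℝ) (v : Euc N → ℝ)
    (hvn : ∀ n, MemLp (vn n) (ENNReal.ofReal p) volume)
    (hv : MemLp v (ENNReal.ofReal p) volume)
    (hvΩ : ∀ᵐ x ∂(volume : Measure (Euc N)), x ∉ Ω → v x = 0)
    (hconv : Tendsto (fun n => eLpNorm (vn n - v) (ENNReal.ofReal p) volume) atTop (𝓝 0))
    (hbdd : ∃ M : ℝ≥0∞, M < ⊤ ∧ ∀ n, PhiA N s p (an n) (vn n) ≤ M) :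
    memW0 N s p Ω v ∧
      PhiA N s p a0 v ≤ Filter.liminf (fun n => PhiA N s p (an n) (vn n)) atTop := by
  obtain ⟨M, hM, hΦM⟩ := hbdd
  have hp0 : 0 < p := by linarith
  have hbounds : ∀ b, memA N α β b → ∀ᵐ q, 0 ≤ b q ∧ b q ≤ β := fun b hb =>
    hb.2.2.mono fun _ hq => ⟨hα.le.trans hq.1, hq.2⟩
  have hliminf : PhiA N s p a0 v ≤ liminf (fun n => PhiA N s p (an n) (vn n)) atTop := by
    rw [PhiA_eq_iSup_truncatedOffDiagonal hp0 ha0.1]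
    exact iSup_le <| eLpNorm_pairDiff_truncatedOffDiagonal_rpow_le_liminf hs.le hp
      (hα.le.trans hαβ) hweak (fun n => (han n).1) (fun n => hbounds _ (han n)) ha0.1
      (hbounds _ ha0) (fun n => (hvn n).1) hv hconv
  have hΦ_lt_top : PhiA N s p a0 v < ∞ :=
    (hliminf.trans (liminf_le_of_frequently_le' (.of_forall hΦM))).trans_lt hM
  have hgag : gagIntegral N s p v < ∞ := by
    have h := (ofReal_mul_gagIntegral_le_PhiA hα.le (ha0.2.2.mono fun _ hq => hq.1) v).trans_lt
      hΦ_lt_top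
    exact lt_top_of_mul_ne_top_right h.ne (ofReal_pos.2 hα).ne'
  exact ⟨⟨hv, rpow_lt_top_of_nonneg (by positivity) hgag.ne, hvΩ⟩, hliminf⟩

/-- Γ-liminf inequality for homogenization of fractional energies: if
`aₙ ⇀* a₀` in `L^∞`, `vₙ → v` in `L^p(Ω)` and `sup_n Φ_{aₙ}(vₙ) < ∞`, then `v ∈ W^{s,p}_0(Ω)`
and `Φ_{a₀}(v) ≤ liminf Φ_{aₙ}(vₙ)`. -/
theorem homogenization_liminf (N : ℕ) (Ω : Set (Euc N)) (hΩo : IsOpen Ω)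
    (hΩb : Bornology.IsBounded Ω) (s p : ℝ) (hs : 0 < s) (hs1 : s < 1) (hp : 1 < p)
    (α β : ℝ) (hα : 0 < α) (hαβ : α ≤ β)
    (an : ℕ → Euc N × Euc N → ℝ) (a0 : Euc N × Euc N → ℝ)
    (han : ∀ n, memA N α β (an n)) (ha0 : memA N α β a0)
    -- weak* convergence in L^∞(ℝ^N×ℝ^N)
    (hweak : ∀ g : Euc N × Euc N → ℝ, Integrable g volume →
      Tendsto (fun n => ∫ q, an n q * g q) atTop (𝓝 (∫ q, a0 q * g q)))
    (vn : ℕ → Euc N → ℝ) (v : Euc N → ℝ)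
    (hvn : ∀ n, MemLp (vn n) (ENNReal.ofReal p) volume)
    (hvnΩ : ∀ n, ∀ᵐ x ∂(volume : Measure (Euc N)), x ∉ Ω → vn n x = 0)
    (hv : MemLp v (ENNReal.ofReal p) volume)
    (hvΩ : ∀ᵐ x ∂(volume : Measure (Euc N)), x ∉ Ω → v x = 0)
    (hconv : Tendsto (fun n => eLpNorm (vn n - v) (ENNReal.ofReal p) volume) atTop (𝓝 0))
    (hbdd : ∃ M : ℝ≥0∞, M < ⊤ ∧ ∀ n, PhiA N s p (an n) (vn n) ≤ M) :
    memW0 N s p Ω v ∧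
      PhiA N s p a0 v ≤ Filter.liminf (fun n => PhiA N s p (an n) (vn n)) atTop :=
  homogenization_liminf_general N Ω s p hs hp α β hα hαβ an a0 han ha0 hweak vn v hvn hv hvΩ hconv
    hbdd
end
end
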